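/- arXiv:1308.5766 — 8 statements merged into one kernel-verified Lean document; each statement's English description precedes it below -/
import Mathlib

section
/- (Abbott–Moser) If n = a·b for positive integers a, b ≥ 2, then m(n) ≤ m(a) · m(b)^a, where m(k) is the least number of hyperedges in a non-2-colorable k-uniform hypergraph. -/
/-- A family of finsets is `n`-uniform if every hyperedge has `n` elements. -/
def IsUniform (n : ℕ) (E : Finset (Finset ℕ)) : Prop := ∀ e ∈ E, e.card = n

/-- A hypergraph (family of hyperedges) is 2-colorable if there is a Red/Blue
coloring of the vertices such that no hyperedge is monochromatic. -/
def Colorable2 (E : Finset (Finset ℕ)) : Prop :=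
  ∃ χ : ℕ → Bool, ∀ e ∈ E, (∃ v ∈ e, χ v = true) ∧ (∃ v ∈ e, χ v = false)

/-- `m n` is the least number of hyperedges in a non-2-colorable `n`-uniform hypergraph. -/
noncomputable def m (n : ℕ) : ℕ :=
  sInf {k | ∃ E : Finset (Finset ℕ), IsUniform n E ∧ ¬ Colorable2 E ∧ E.card = k}

/-- A hyperedge is monochromatic under `χ` if all its vertices get the same color. -/
def Mono (χ : ℕ → Bool) (s : Finset ℕ) : Prop :=
  (∀ x ∈ s, χ x = true) ∨ (∀ x ∈ s, χ x = false)

lemma not_col (E : Finset (Finset ℕ)) :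
    ¬ Colorable2 E ↔ ∀ χ : ℕ → Bool, ∃ e ∈ E, Mono χ e := by
  constructor
  · intro h χ
    by_contra hc
    push_neg at hc
    apply h
    refine ⟨χ, fun e he => ?_⟩
    have := hc e he
    unfold Mono at this
    push_neg at this
    obtain ⟨⟨v, hv, hvt⟩, ⟨w, hw, hwf⟩⟩ := this
    simp only [Bool.not_eq_true] at hvt
    simp only [Bool.not_eq_false] at hwf
    exact ⟨⟨w, hw, hwf⟩, ⟨v, hv, hvt⟩⟩
  · rintro h ⟨χ, hχ⟩
    obtain ⟨e, he, hm⟩ := h χ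
    obtain ⟨⟨v, hv, hvt⟩, ⟨w, hw, hwf⟩⟩ := hχ e he
    rcases hm with hm | hm
    · simp [hm w hw] at hwf
    · simp [hm v hv] at hvt

lemma exists_noncol (n : ℕ) (hn : 1 ≤ n) :
    ∃ E : Finset (Finset ℕ), IsUniform n E ∧ ¬ Colorable2 E := by
  classical
  refine ⟨Finset.powersetCard n (Finset.range (2*n-1)), ?_, ?_⟩
  · intro e he
    exact (Finset.mem_powersetCard.mp he).2
  · rw [not_col]
    intro χ
    set S := (Finset.range (2*n-1)).filter (fun x => χ x = true) with hS
    set T := (Finset.range (2*n-1)).filter (fun x => ¬ (χ x = true)) with hT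
    have hcard : S.card + T.card = 2*n-1 := by
      rw [hS, hT, Finset.card_filter_add_card_filter_not, Finset.card_range]
    have : n ≤ S.card ∨ n ≤ T.card := by omega
    rcases this with h | h
    · obtain ⟨t, hts, htc⟩ := Finset.exists_subset_card_eq h
      refine ⟨t, Finset.mem_powersetCard.mpr ⟨hts.trans (Finset.filter_subset _ _), htc⟩, ?_⟩
      left
      intro x hx
      exact (Finset.mem_filter.mp (hts hx)).2
    · obtain ⟨t, hts, htc⟩ := Finset.exists_subset_card_eq h
      refine ⟨t, Finset.mem_powersetCard.mpr ⟨hts.trans (Finset.filter_subset _ _), htc⟩, ?_⟩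
      right
      intro x hx
      exact Bool.not_eq_true _ |>.mp (Finset.mem_filter.mp (hts hx)).2

lemma construction (a b : ℕ) (A B : Finset (Finset ℕ))
    (hAu : IsUniform a A) (hBu : IsUniform b B)
    (hAc : ¬ Colorable2 A) (hBc : ¬ Colorable2 B) :
    ∃ E : Finset (Finset ℕ), IsUniform (a*b) E ∧ ¬ Colorable2 E ∧
      E.card ≤ A.card * B.card ^ a := by
  classical
  set E : Finset (Finset ℕ) :=
    A.biUnion (fun e => (e.pi (fun _ => B)).image
      (fun f => e.attach.biUnion (fun v => (f v.1 v.2).image (fun w => Nat.pair v.1 w)))) with hE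
  have hdisj : ∀ (e : Finset ℕ) (F : {x // x ∈ e} → Finset ℕ),
      ∀ v ∈ e.attach, ∀ v' ∈ e.attach, v ≠ v' →
      Disjoint ((F v).image (fun w => Nat.pair v.1 w))
               ((F v').image (fun w => Nat.pair v'.1 w)) := by
    intro e F v _ v' _ hvv'
    rw [Finset.disjoint_left]
    rintro x hx hx'
    obtain ⟨w, _, rfl⟩ := Finset.mem_image.mp hx
    obtain ⟨w', _, heq⟩ := Finset.mem_image.mp hx'
    exact hvv' (Subtype.ext (Nat.pair_eq_pair.mp heq).1.symm)
  refine ⟨E, ?_, ?_, ?_⟩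
  · -- uniform
    intro s hs
    rw [hE, Finset.mem_biUnion] at hs
    obtain ⟨e, he, hs⟩ := hs
    obtain ⟨f, hf, rfl⟩ := Finset.mem_image.mp hs
    rw [Finset.card_biUnion (hdisj e (fun v => f v.1 v.2))]
    have : ∀ v ∈ e.attach, ((f v.1 v.2).image (fun w => Nat.pair v.1 w)).card = b := by
      intro v _
      rw [Finset.card_image_of_injective _ (fun w w' h => (Nat.pair_eq_pair.mp h).2)]
      exact hBu _ (Finset.mem_pi.mp hf v.1 v.2)
    rw [Finset.sum_congr rfl this, Finset.sum_const, Finset.card_attach, hAu e he, smul_eq_mul]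
  · -- not colorable
    rw [not_col]
    intro χ
    have hB' := (not_col B).mp hBc
    choose eB heB hmB using fun v : ℕ => hB' (fun w => χ (Nat.pair v w))
    set ψ : ℕ → Bool := fun v =>
      if (∀ w ∈ eB v, χ (Nat.pair v w) = true) then true else false with hψ
    have hψt : ∀ v, ψ v = true → ∀ w ∈ eB v, χ (Nat.pair v w) = true := by
      intro v hv
      by_contra hc
      rw [hψ] at hv
      simp only [if_neg hc] at hv
      exact absurd hv (by decide)
    have hψf : ∀ v, ψ v = false → ∀ w ∈ eB v, χ (Nat.pair v w) = false := by
      intro v hv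
      have : ¬ (∀ w ∈ eB v, χ (Nat.pair v w) = true) := by
        intro hall
        rw [hψ] at hv
        simp only [if_pos hall] at hv
        exact absurd hv (by decide)
      rcases hmB v with h | h
      · exact absurd h this
      · exact h
    obtain ⟨eA, heA, hmA⟩ := (not_col A).mp hAc ψ
    refine ⟨eA.attach.biUnion (fun v => (eB v.1).image (fun w => Nat.pair v.1 w)), ?_, ?_⟩
    · rw [hE, Finset.mem_biUnion]
      refine ⟨eA, heA, Finset.mem_image.mpr ⟨fun v _ => eB v, ?_, rfl⟩⟩
      exact Finset.mem_pi.mpr (fun v hv => heB v)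
    · have key : ∀ c, (∀ v ∈ eA, ψ v = c) →
          ∀ x ∈ eA.attach.biUnion (fun v => (eB v.1).image (fun w => Nat.pair v.1 w)), χ x = c := by
        intro c hc x hx
        rw [Finset.mem_biUnion] at hx
        obtain ⟨v, hv, hx⟩ := hx
        obtain ⟨w, hw, rfl⟩ := Finset.mem_image.mp hx
        cases c
        · exact hψf v.1 (hc v.1 v.2) w hw
        · exact hψt v.1 (hc v.1 v.2) w hw
      rcases hmA with h | h
      · exact Or.inl (key true h)
      · exact Or.inr (key false h)
  · -- cardinality
    calc E.card ≤ ∑ e ∈ A, ((e.pi (fun _ => B)).image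
          (fun f => e.attach.biUnion (fun v => (f v.1 v.2).image (fun w => Nat.pair v.1 w)))).card :=
        Finset.card_biUnion_le
      _ ≤ ∑ e ∈ A, (e.pi (fun _ => B)).card := Finset.sum_le_sum (fun e _ => Finset.card_image_le)
      _ = ∑ e ∈ A, B.card ^ a := by
          refine Finset.sum_congr rfl (fun e he => ?_)
          rw [Finset.card_pi, Finset.prod_const, hAu e he]
      _ = A.card * B.card ^ a := by rw [Finset.sum_const, smul_eq_mul]

/-- Abbott–Moser: if `n = a * b` with `a, b ≥ 2`, then `m n ≤ m a * (m b) ^ a`. -/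
theorem abbott_moser (a b : ℕ) (ha : 2 ≤ a) (hb : 2 ≤ b) :
    m (a * b) ≤ m a * (m b) ^ a := by
  have hna : {k | ∃ E : Finset (Finset ℕ), IsUniform a E ∧ ¬ Colorable2 E ∧ E.card = k}.Nonempty := by
    obtain ⟨E, h1, h2⟩ := exists_noncol a (by omega)
    exact ⟨E.card, E, h1, h2, rfl⟩
  have hnb : {k | ∃ E : Finset (Finset ℕ), IsUniform b E ∧ ¬ Colorable2 E ∧ E.card = k}.Nonempty := by
    obtain ⟨E, h1, h2⟩ := exists_noncol b (by omega)
    exact ⟨E.card, E, h1, h2, rfl⟩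
  obtain ⟨A, hAu, hAc, hAcard⟩ := Nat.sInf_mem hna
  obtain ⟨B, hBu, hBc, hBcard⟩ := Nat.sInf_mem hnb
  obtain ⟨E, hu, hc, hcard⟩ := construction a b A B hAu hBu hAc hBc
  have h1 : m (a * b) ≤ E.card := Nat.sInf_le ⟨E, hu, hc, rfl⟩
  calc m (a * b) ≤ E.card := h1
    _ ≤ A.card * B.card ^ a := hcard
    _ = m a * (m b) ^ a := by rw [hAcard, hBcard]; rfl
end

section
/- The Abbott–Moser product hypergraph is not 2-colorable: let A be a non-2-colorable a-uniform hypergraph on vertex set W, and for each w ∈ W let B_w be a non-2-colorable b-uniform hypergraph on pairwise disjoint vertex sets. Then the ab-uniform hypergraph whose hyperedges are all sets of the form ⋃_{w ∈ e} f(w), where e is a hyperedge of A and f assigns to each w ∈ e a hyperedge of B_w, is not 2-colorable. -/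
/-- Abbott–Moser product hypergraph is not 2-colorable. `EA` is the hyperedge family of a
non-2-colorable `a`-uniform hypergraph on index vertices `w : ℕ`, and for each `w` the
family `EB w` is a non-2-colorable `b`-uniform hypergraph, on pairwise disjoint vertex sets.
Every coloring makes some product hyperedge `⋃_{w ∈ e} f w` monochromatic. -/
theorem abbott_moser_product_not_two_colorable
    (a b : ℕ) (EA : Finset (Finset ℕ)) (EB : ℕ → Finset (Finset ℕ))
    (hAu : IsUniform a EA) (hBu : ∀ w, IsUniform b (EB w))
    (hdisj : ∀ w w', w ≠ w' → ∀ e ∈ EB w, ∀ e' ∈ EB w', Disjoint e e')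
    (hA : ¬ Colorable2 EA) (hB : ∀ w, ¬ Colorable2 (EB w)) :
    ∀ χ : ℕ → Bool, ∃ e ∈ EA, ∃ f : ℕ → Finset ℕ,
      (∀ w ∈ e, f w ∈ EB w) ∧ Mono χ (e.biUnion f) := by
  intro χ
  -- For each w, pick a monochromatic edge of EB w under χ.
  have hg : ∀ w, ∃ g ∈ EB w, Mono χ g := by
    intro w
    by_contra h
    push_neg at h
    exact hB w ⟨χ, fun e he => by
      have hm := h e he
      unfold Mono at hm
      push_neg at hm
      obtain ⟨⟨x, hx, hxt⟩, ⟨y, hy, hyf⟩⟩ := hm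
      exact ⟨⟨y, hy, by simpa using hyf⟩, ⟨x, hx, by simpa using hxt⟩⟩⟩
  choose g hgmem hgmono using hg
  -- coloring of index vertices
  set ψ : ℕ → Bool := fun w => decide (∀ x ∈ g w, χ x = true) with hψ
  have key : ∀ w, (ψ w = true → ∀ x ∈ g w, χ x = true) ∧ (ψ w = false → ∀ x ∈ g w, χ x = false) := by
    intro w
    constructor
    · intro h; simpa [hψ] using h
    · intro h
      rcases hgmono w with hm | hm
      · exfalso
        rw [hψ] at h
        simp only [decide_eq_false_iff_not] at h
        exact h hm
      · exact hm
  -- apply non-2-colorability of EA to ψ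
  by_contra hcon
  push_neg at hcon
  apply hA
  refine ⟨ψ, fun e he => ?_⟩
  by_contra hbad
  push_neg at hbad
  -- e is monochromatic under ψ; build the product edge
  have hmono : Mono χ (e.biUnion g) := by
    by_cases hall : ∀ w ∈ e, ψ w = true
    · left
      intro x hx
      obtain ⟨w, hw, hxg⟩ := Finset.mem_biUnion.mp hx
      exact (key w).1 (hall w hw) x hxg
    · push_neg at hall
      obtain ⟨w0, hw0, hw0f⟩ := hall
      have hallf : ∀ w ∈ e, ψ w = false := by
        intro w hw
        rcases Bool.eq_false_or_eq_true (ψ w) with h | h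
        · exact absurd (show ψ w0 = false by simpa using hw0f) (hbad ⟨w, hw, h⟩ w0 hw0)
        · exact h
      right
      intro x hx
      obtain ⟨w, hw, hxg⟩ := Finset.mem_biUnion.mp hx
      exact (key w).2 (hallf w hw) x hxg
  exact absurd hmono (by
    have := hcon e he g (fun w hw => hgmem w)
    exact this)
end

section
/- (Abbott–Hanson) For odd n ≥ 3, m(n) ≤ 2^{n-1} + n · m(n-2). -/
/-!
Take a non-2-colorable core `C` with `m (n - 2)` edges and fix a coloring. Some core edge `e` is
monochromatic, say of color `c`. If some pair `u_i, v_i` is colored `c` as well, the edge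
`{u_i} ∪ e ∪ {v_i}` is monochromatic. Otherwise no pair is colored `c` twice, and a parity count
(this is where `n` odd enters) yields an odd `S` such that `U_S ∪ V_{[n] \ S}` is monochromatic.
There are `n * m (n - 2)` edges of the first kind and `2 ^ (n - 1)` of the second.
-/

open Finset

lemma card_powerset_filter_odd_card {α : Type*} [DecidableEq α] {s : Finset α}
    (hs : s.Nonempty) : #(s.powerset.filter fun t => Odd #t) = 2 ^ (#s - 1) := by
  have htotal := card_filter_add_card_filter_not (s := s.powerset) (p := fun t => Odd #t)
  -- the alternating sum over subsets vanishes, so odd and even subsets are equinumerous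
  have halt := sum_powerset_neg_one_pow_card_of_nonempty hs
  rw [← sum_filter_add_sum_filter_not _ (fun t => Odd #t),
    sum_congr rfl fun t ht => (mem_filter.mp ht).2.neg_one_pow,
    sum_congr rfl fun t ht => (Nat.not_odd_iff_even.mp (mem_filter.mp ht).2).neg_one_pow]
    at halt
  simp only [sum_const, nsmul_eq_mul, mul_neg, mul_one] at halt
  have hpow : 2 ^ #s = 2 * 2 ^ (#s - 1) := by
    rw [← pow_succ', Nat.sub_add_cancel hs.card_pos]
  rw [card_powerset, hpow] at htotal
  omega

lemma mono_iff_exists {χ : ℕ → Bool} {s : Finset ℕ} : Mono χ s ↔ ∃ c, ∀ x ∈ s, χ x = c := by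
  constructor
  · rintro (h | h)
    exacts [⟨_, h⟩, ⟨_, h⟩]
  · rintro ⟨(_ | _), h⟩
    exacts [Or.inr h, Or.inl h]

lemma not_mono_iff {χ : ℕ → Bool} {s : Finset ℕ} :
    ¬ Mono χ s ↔ (∃ v ∈ s, χ v = true) ∧ ∃ v ∈ s, χ v = false := by
  simp [Mono, not_or, and_comm]

lemma not_colorable2_iff {E : Finset (Finset ℕ)} :
    ¬ Colorable2 E ↔ ∀ χ : ℕ → Bool, ∃ e ∈ E, Mono χ e := by
  simp only [Colorable2, ← not_mono_iff, not_exists, not_forall, not_not, exists_prop]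

lemma IsUniform.union {n : ℕ} {E F : Finset (Finset ℕ)} (hE : IsUniform n E)
    (hF : IsUniform n F) : IsUniform n (E ∪ F) :=
  fun e he => (mem_union.mp he).elim (hE e) (hF e)

/-- The complete `k`-uniform hypergraph on `2k - 1` vertices. -/
lemma exists_isUniform_not_colorable2 (k : ℕ) :
    ∃ E : Finset (Finset ℕ), IsUniform k E ∧ ¬ Colorable2 E := by
  refine ⟨powersetCard k (range (2 * k - 1)), fun e he => (mem_powersetCard.mp he).2, ?_⟩
  rw [not_colorable2_iff]
  intro χ
  obtain ⟨c, hc⟩ : ∃ c, k ≤ #((range (2 * k - 1)).filter (χ · = c)) := by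
    have hsplit := card_filter_add_card_filter_not (s := range (2 * k - 1)) (p := (χ · = true))
    simp only [Bool.not_eq_true, card_range] at hsplit
    by_contra! h
    have := h true
    have := h false
    omega
  obtain ⟨e, he, hcard⟩ := exists_subset_card_eq hc
  exact ⟨e, mem_powersetCard.mpr ⟨he.trans (filter_subset _ _), hcard⟩,
    mono_iff_exists.mpr ⟨c, fun x hx => (mem_filter.mp (he hx)).2⟩⟩

lemma exists_card_eq_m (k : ℕ) :
    ∃ C : Finset (Finset ℕ), IsUniform k C ∧ ¬ Colorable2 C ∧ #C = m k := by
  obtain ⟨E, hunif, hcol⟩ := exists_isUniform_not_colorable2 k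
  exact Nat.sInf_mem (s := {j | ∃ E, IsUniform k E ∧ ¬ Colorable2 E ∧ #E = j})
    ⟨_, E, hunif, hcol, rfl⟩

lemma m_le_card {n : ℕ} {E : Finset (Finset ℕ)} (hunif : IsUniform n E)
    (hcol : ¬ Colorable2 E) : m n ≤ #E :=
  Nat.sInf_le ⟨E, hunif, hcol, rfl⟩

lemma exists_odd_monochromatic_split {n : ℕ} (hn : Odd n) {a b : ℕ → Bool} {c : Bool}
    (hab : ∀ i < n, a i = c → b i ≠ c) :
    ∃ S ⊆ range n, Odd #S ∧ ∃ d, (∀ i ∈ S, a i = d) ∧ ∀ i ∈ range n \ S, b i = d := by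
  set S₀ := (range n).filter (a · ≠ c)
  have hS₀ : S₀ ⊆ range n := filter_subset _ _
  have hb : ∀ i ∈ range n \ S₀, b i ≠ c := by
    intro i hi
    obtain ⟨hin, hiS₀⟩ := mem_sdiff.mp hi
    exact hab i (mem_range.mp hin) (by simpa [S₀, hin] using hiS₀)
  by_cases hS₀odd : Odd #S₀
  · exact ⟨S₀, hS₀, hS₀odd, !c, fun i hi => Bool.eq_not_of_ne (mem_filter.mp hi).2,
      fun i hi => Bool.eq_not_of_ne (hb i hi)⟩
  have hS₀even := Nat.not_odd_iff_even.mp hS₀odd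
  by_cases hboth : ∃ i ∈ S₀, b i ≠ c
  · -- moving the column `i` to the `b` side fixes the parity
    obtain ⟨i, hi, hbi⟩ := hboth
    refine ⟨S₀.erase i, (erase_subset _ _).trans hS₀, ?_, !c,
      fun j hj => Bool.eq_not_of_ne (mem_filter.mp (mem_of_mem_erase hj)).2, fun j hj => ?_⟩
    · rw [card_erase_of_mem hi]
      exact Nat.Even.sub_odd (card_pos.mpr ⟨i, hi⟩) hS₀even odd_one
    · obtain ⟨hjn, hjS⟩ := mem_sdiff.mp hj
      rcases eq_or_ne j i with rfl | hji
      · exact Bool.eq_not_of_ne hbi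
      · exact Bool.eq_not_of_ne (hb j (mem_sdiff.mpr ⟨hjn, fun h => hjS (mem_erase.mpr ⟨hji, h⟩)⟩))
  · -- otherwise every column has exactly one entry `c`; take the complement
    push Not at hboth
    refine ⟨range n \ S₀, sdiff_subset, ?_, c, fun i hi => ?_, fun i hi => ?_⟩
    · rw [card_sdiff_of_subset hS₀, card_range]
      exact Nat.Odd.sub_even (card_le_card hS₀ |>.trans_eq (card_range n)) hn hS₀even
    · obtain ⟨hin, hiS₀⟩ := mem_sdiff.mp hi
      simpa [S₀, hin] using hiS₀
    · exact hboth i (by rwa [Finset.sdiff_sdiff_eq_self hS₀] at hi)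

section Construction

variable (u v : ℕ → ℕ) (n : ℕ)

/-- The edges (i) of the construction, with `u_i = u i` and `v_i = v i`. -/
def pairEdges (C : Finset (Finset ℕ)) : Finset (Finset ℕ) :=
  (range n ×ˢ C).image fun p => insert (u p.1) (insert (v p.1) p.2)

/-- For odd `n` these are exactly the edges (ii)–(iv): an odd `S` with `#S ≤ n / 2` is an edge
(iii), otherwise `[n] \ S` is even and gives (ii) or (iv). -/
def oddSplitEdges : Finset (Finset ℕ) :=
  ((range n).powerset.filter fun S => Odd #S).image fun S => S.image u ∪ (range n \ S).image v

variable {u v n}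

lemma card_pairEdges_le (C : Finset (Finset ℕ)) : #(pairEdges u v n C) ≤ n * #C :=
  card_image_le.trans_eq (by rw [card_product, card_range])

lemma card_oddSplitEdges_le (hn : 0 < n) : #(oddSplitEdges u v n) ≤ 2 ^ (n - 1) :=
  card_image_le.trans_eq <| by
    rw [card_powerset_filter_odd_card (nonempty_range_iff.mpr hn.ne'), card_range]

lemma isUniform_pairEdges {k : ℕ} {C : Finset (Finset ℕ)} (hC : IsUniform k C)
    (huv : ∀ i, u i ≠ v i) (hCu : ∀ e ∈ C, ∀ i, u i ∉ e) (hCv : ∀ e ∈ C, ∀ i, v i ∉ e) :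
    IsUniform (k + 2) (pairEdges u v n C) := by
  intro f hf
  obtain ⟨⟨i, e⟩, hie, rfl⟩ := mem_image.mp hf
  have he := (mem_product.mp hie).2
  rw [card_insert_of_notMem (by simp [huv i, hCu e he i]), card_insert_of_notMem (hCv e he i),
    hC e he]

lemma isUniform_oddSplitEdges (hu : u.Injective) (hv : v.Injective) (huv : ∀ i j, u i ≠ v j) :
    IsUniform n (oddSplitEdges u v n) := by
  intro f hf
  obtain ⟨S, hS, rfl⟩ := mem_image.mp hf
  have hSn := mem_powerset.mp (mem_filter.mp hS).1
  have hdisj : Disjoint (S.image u) ((range n \ S).image v) := by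
    simp only [disjoint_left, mem_image]
    rintro _ ⟨i, -, rfl⟩ ⟨j, -, hji⟩
    exact huv i j hji.symm
  rw [card_union_of_disjoint hdisj, card_image_of_injective _ hu, card_image_of_injective _ hv,
    card_sdiff_of_subset hSn, card_range, Nat.add_sub_cancel' (card_le_card hSn |>.trans_eq
      (card_range n))]

lemma not_colorable2_pairEdges_union_oddSplitEdges (hn : Odd n) {C : Finset (Finset ℕ)}
    (hC : ¬ Colorable2 C) : ¬ Colorable2 (pairEdges u v n C ∪ oddSplitEdges u v n) := by
  rw [not_colorable2_iff] at hC ⊢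
  intro χ
  obtain ⟨e, he, c, hec⟩ := (hC χ).imp fun e => And.imp_right mono_iff_exists.mp
  by_cases hpair : ∃ i < n, χ (u i) = c ∧ χ (v i) = c
  · obtain ⟨i, hi, hui, hvi⟩ := hpair
    refine ⟨_, mem_union_left _ (mem_image.mpr ⟨(i, e), mem_product.mpr ⟨mem_range.mpr hi, he⟩,
      rfl⟩), mono_iff_exists.mpr ⟨c, ?_⟩⟩
    simpa [hui, hvi] using hec
  · push Not at hpair
    obtain ⟨S, hS, hSodd, d, hSd, hSd'⟩ := exists_odd_monochromatic_split hn hpair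
    refine ⟨_, mem_union_right _ (mem_image_of_mem _ (mem_filter.mpr ⟨mem_powerset.mpr hS,
      hSodd⟩)), mono_iff_exists.mpr ⟨d, ?_⟩⟩
    intro x hx
    rcases mem_union.mp hx with hx | hx <;> obtain ⟨i, hi, rfl⟩ := mem_image.mp hx
    exacts [hSd i hi, hSd' i hi]

end Construction

/-- Abbott–Hanson: for odd `n ≥ 3`, `m n ≤ 2 ^ (n - 1) + n * m (n - 2)`. -/
theorem abbott_hanson_recurrence (n : ℕ) (hn : 3 ≤ n) (hodd : Odd n) :
    m n ≤ 2 ^ (n - 1) + n * m (n - 2) := by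
  obtain ⟨C, hCunif, hCcol, hCcard⟩ := exists_card_eq_m (n - 2)
  obtain ⟨B, hB⟩ := (C.sup id).exists_nat_subset_range
  have hfresh : ∀ e ∈ C, ∀ x ∈ e, x < B := fun e he x hx =>
    mem_range.mp (hB (le_sup (f := id) he hx))
  set u : ℕ → ℕ := fun i => B + 2 * i
  set v : ℕ → ℕ := fun i => B + 2 * i + 1
  have huv : ∀ i j, u i ≠ v j := by grind
  have hunif : IsUniform n (pairEdges u v n C ∪ oddSplitEdges u v n) := by
    have hpair := isUniform_pairEdges (n := n) hCunif (fun i => huv i i)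
      (fun e he i hx => by grind) (fun e he i hx => by grind)
    rw [Nat.sub_add_cancel (by omega)] at hpair
    exact hpair.union (isUniform_oddSplitEdges (fun i j h => by grind) (fun i j h => by grind) huv)
  calc m n ≤ #(pairEdges u v n C ∪ oddSplitEdges u v n) :=
        m_le_card hunif (not_colorable2_pairEdges_union_oddSplitEdges hodd hCcol)
    _ ≤ #(pairEdges u v n C) + #(oddSplitEdges u v n) := card_union_le _ _
    _ ≤ n * m (n - 2) + 2 ^ (n - 1) :=
      add_le_add (hCcard ▸ card_pairEdges_le C) (card_oddSplitEdges_le (by omega))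
    _ = 2 ^ (n - 1) + n * m (n - 2) := add_comm _ _
end

section
/- The Abbott–Hanson hypergraph is not 2-colorable: let C be a non-2-colorable (n-2)-uniform hypergraph on vertex set X, and let U = {u_1,...,u_n}, V = {v_1,...,v_n} be disjoint from X and from each other. Then the n-uniform hypergraph on X ∪ U ∪ V with hyperedges (i) {u_i} ∪ e ∪ {v_i} for all 1 ≤ i ≤ n and hyperedges e of C, (ii) U, (iii) U_K ∪ (V∖V_K) for all K ⊂ {1,...,n} with |K| odd and |K| ≤ ⌊n/2⌋, (iv) V_K ∪ (U∖U_K) for all K with |K| even and 2 ≤ |K| ≤ ⌊n/2⌋, is not 2-colorable. -/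
lemma mono_of {χ : ℕ → Bool} {s : Finset ℕ} (b : Bool) (h : ∀ x ∈ s, χ x = b) :
    Mono χ s := by cases b; exacts [Or.inr h, Or.inl h]

lemma ah_arith (n k l : ℕ) (hn : 3 ≤ n) (h1 : 1 ≤ k) (h2 : k + 1 ≤ n) (h3 : k + l ≤ n) :
    (∃ j, j % 2 = 1 ∧ l ≤ j ∧ j ≤ n / 2 ∧ j + k ≤ n) ∨
    (∃ j, j % 2 = 0 ∧ 2 ≤ j ∧ k ≤ j ∧ j ≤ n / 2 ∧ j + l ≤ n) ∨
    (k + l = n ∧ k % 2 = 1 ∧ k ≤ n / 2) ∨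
    (k + l = n ∧ l % 2 = 0 ∧ 2 ≤ l ∧ l ≤ n / 2) := by
  have H : (l % 2 = 1 ∧ l ≤ n / 2 ∧ l + k ≤ n) ∨
      ((l + 1) % 2 = 1 ∧ (l + 1) ≤ n / 2 ∧ (l + 1) + k ≤ n) ∨
      (k % 2 = 0 ∧ 2 ≤ k ∧ k ≤ n / 2 ∧ k + l ≤ n) ∨
      ((k + 1) % 2 = 0 ∧ 2 ≤ k + 1 ∧ k + 1 ≤ n / 2 ∧ (k + 1) + l ≤ n) ∨
      (k ≤ 2 ∧ 2 ≤ n / 2 ∧ 2 + l ≤ n) ∨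
      (k + l = n ∧ k % 2 = 1 ∧ k ≤ n / 2) ∨
      (k + l = n ∧ l % 2 = 0 ∧ 2 ≤ l ∧ l ≤ n / 2) := by omega
  rcases H with h | h | h | h | h | h | h
  · exact Or.inl ⟨l, h.1, le_refl l, h.2.1, h.2.2⟩
  · exact Or.inl ⟨l + 1, h.1, by omega, h.2.1, h.2.2⟩
  · exact Or.inr (Or.inl ⟨k, h.1, h.2.1, le_refl k, h.2.2.1, h.2.2.2⟩)
  · exact Or.inr (Or.inl ⟨k + 1, h.1, h.2.1, by omega, h.2.2.1, h.2.2.2⟩)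
  · exact Or.inr (Or.inl ⟨2, rfl, le_refl 2, h.1, h.2.1, h.2.2⟩)
  · exact Or.inr (Or.inr (Or.inl h))
  · exact Or.inr (Or.inr (Or.inr h))

lemma ah_key (n : ℕ) (hn : 3 ≤ n) (u v : Fin n → ℕ) (χ : ℕ → Bool) (c : Bool)
    (h : ∀ i : Fin n, χ (u i) ≠ c ∨ χ (v i) ≠ c) :
    Mono χ (Finset.univ.image u) ∨
    (∃ K : Finset (Fin n), Odd K.card ∧ K.card ≤ n / 2 ∧
      Mono χ (K.image u ∪ (Finset.univ \ K).image v)) ∨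
    (∃ K : Finset (Fin n), Even K.card ∧ 2 ≤ K.card ∧ K.card ≤ n / 2 ∧
      Mono χ (K.image v ∪ (Finset.univ \ K).image u)) := by
  classical
  have hne : ∀ x : Bool, x ≠ c → x = !c := fun x hx => by cases c <;> cases x <;> simp_all
  set K := Finset.univ.filter (fun i => χ (u i) = c) with hK
  set L := Finset.univ.filter (fun i => χ (v i) = c) with hL
  have hKm : ∀ i, i ∈ K ↔ χ (u i) = c := fun i => by simp [hK]
  have hLm : ∀ i, i ∈ L ↔ χ (v i) = c := fun i => by simp [hL]
  have hd : ∀ i, i ∈ K → i ∉ L := fun i hiK hiL =>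
    (h i).elim (fun h' => h' ((hKm i).1 hiK)) (fun h' => h' ((hLm i).1 hiL))
  by_cases hK0 : K = ∅
  · left
    apply mono_of (!c)
    intro x hx
    obtain ⟨i, _, rfl⟩ := Finset.mem_image.1 hx
    have hiK : i ∉ K := by simp [hK0]
    exact hne _ (fun hc => hiK ((hKm i).2 hc))
  by_cases hKu : K = Finset.univ
  · left
    apply mono_of c
    intro x hx
    obtain ⟨i, _, rfl⟩ := Finset.mem_image.1 hx
    exact (hKm i).1 (hKu ▸ Finset.mem_univ i)
  have hk1 : 1 ≤ K.card := Finset.card_pos.2 (Finset.nonempty_iff_ne_empty.2 hK0)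
  have hk2 : K.card + 1 ≤ n := by
    have h' := Finset.card_lt_card (Finset.ssubset_univ_iff.2 hKu)
    rwa [Finset.card_univ, Fintype.card_fin] at h'
  have hdisj : Disjoint K L := Finset.disjoint_left.2 hd
  have hkl : K.card + L.card ≤ n := by
    have h1 := Finset.card_union_of_disjoint hdisj
    have h2 := Finset.card_le_univ (K ∪ L)
    rw [Fintype.card_fin] at h2
    omega
  rcases ah_arith n K.card L.card hn hk1 hk2 hkl with
    ⟨j, hj, hlj, hjm, hjk⟩ | ⟨j, hj, hj2, hkj, hjm, hjl⟩ | ⟨hsum, hodd, hkm⟩ |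
    ⟨hsum, heven, hl2, hlm⟩
  · -- odd set J, L ⊆ J ⊆ Kᶜ, hyperedge (iii) monochromatic in color !c
    have hLsub : L ⊆ Kᶜ := fun i hiL => Finset.mem_compl.2 (fun hiK => hd i hiK hiL)
    have hcard : j ≤ Kᶜ.card := by
      rw [Finset.card_compl, Fintype.card_fin]; omega
    obtain ⟨J, hLJ, hJK, hJcard⟩ := Finset.exists_subsuperset_card_eq hLsub hlj hcard
    refine Or.inr (Or.inl ⟨J, by rw [hJcard]; exact Nat.odd_iff.2 hj, by rw [hJcard]; exact hjm, ?_⟩)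
    apply mono_of (!c)
    intro x hx
    rcases Finset.mem_union.1 hx with hx | hx
    · obtain ⟨i, hiJ, rfl⟩ := Finset.mem_image.1 hx
      have hiK : i ∉ K := Finset.mem_compl.1 (hJK hiJ)
      exact hne _ (fun hc => hiK ((hKm i).2 hc))
    · obtain ⟨i, hiJ, rfl⟩ := Finset.mem_image.1 hx
      have hiJ' : i ∉ J := (Finset.mem_sdiff.1 hiJ).2
      have hiL : i ∉ L := fun hiL => hiJ' (hLJ hiL)
      exact hne _ (fun hc => hiL ((hLm i).2 hc))
  · -- even set J, K ⊆ J ⊆ Lᶜ, hyperedge (iv) monochromatic in color !c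
    have hKsub : K ⊆ Lᶜ := fun i hiK => Finset.mem_compl.2 (hd i hiK)
    have hcard : j ≤ Lᶜ.card := by
      rw [Finset.card_compl, Fintype.card_fin]; omega
    obtain ⟨J, hKJ, hJL, hJcard⟩ := Finset.exists_subsuperset_card_eq hKsub hkj hcard
    refine Or.inr (Or.inr ⟨J, by rw [hJcard]; exact Nat.even_iff.2 hj,
      by rw [hJcard]; exact hj2, by rw [hJcard]; exact hjm, ?_⟩)
    apply mono_of (!c)
    intro x hx
    rcases Finset.mem_union.1 hx with hx | hx
    · obtain ⟨i, hiJ, rfl⟩ := Finset.mem_image.1 hx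
      have hiL : i ∉ L := Finset.mem_compl.1 (hJL hiJ)
      exact hne _ (fun hc => hiL ((hLm i).2 hc))
    · obtain ⟨i, hiJ, rfl⟩ := Finset.mem_image.1 hx
      have hiJ' : i ∉ J := (Finset.mem_sdiff.1 hiJ).2
      have hiK : i ∉ K := fun hiK => hiJ' (hKJ hiK)
      exact hne _ (fun hc => hiK ((hKm i).2 hc))
  · -- K = Lᶜ, hyperedge (iii) with J = K monochromatic in color c
    have huniv : K ∪ L = Finset.univ := Finset.eq_univ_of_card _
      (by rw [Finset.card_union_of_disjoint hdisj, Fintype.card_fin]; exact hsum)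
    refine Or.inr (Or.inl ⟨K, Nat.odd_iff.2 hodd, hkm, ?_⟩)
    apply mono_of c
    intro x hx
    rcases Finset.mem_union.1 hx with hx | hx
    · obtain ⟨i, hiK, rfl⟩ := Finset.mem_image.1 hx
      exact (hKm i).1 hiK
    · obtain ⟨i, hiK, rfl⟩ := Finset.mem_image.1 hx
      have hiK' : i ∉ K := (Finset.mem_sdiff.1 hiK).2
      have : i ∈ K ∪ L := huniv ▸ Finset.mem_univ i
      rcases Finset.mem_union.1 this with h' | h'
      · exact absurd h' hiK'
      · exact (hLm i).1 h'
  · -- L = Kᶜ, hyperedge (iv) with J = L monochromatic in color c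
    have huniv : K ∪ L = Finset.univ := Finset.eq_univ_of_card _
      (by rw [Finset.card_union_of_disjoint hdisj, Fintype.card_fin]; exact hsum)
    refine Or.inr (Or.inr ⟨L, Nat.even_iff.2 heven, hl2, hlm, ?_⟩)
    apply mono_of c
    intro x hx
    rcases Finset.mem_union.1 hx with hx | hx
    · obtain ⟨i, hiL, rfl⟩ := Finset.mem_image.1 hx
      exact (hLm i).1 hiL
    · obtain ⟨i, hiL, rfl⟩ := Finset.mem_image.1 hx
      have hiL' : i ∉ L := (Finset.mem_sdiff.1 hiL).2
      have : i ∈ K ∪ L := huniv ▸ Finset.mem_univ i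
      rcases Finset.mem_union.1 this with h' | h'
      · exact (hKm i).1 h'
      · exact absurd h' hiL'

/-- The Abbott–Hanson hypergraph is not 2-colorable. `EC` is the hyperedge family of a
non-2-colorable `(n-2)`-uniform core hypergraph on vertex set `X`, and
`u, v : Fin n → ℕ` give `2n` fresh distinct vertices. Every coloring makes
one of the hyperedges (i)–(iv) of the construction monochromatic. -/
theorem abbott_hanson_not_two_colorable
    (n : ℕ) (hn : 3 ≤ n) (X : Finset ℕ) (EC : Finset (Finset ℕ))
    (hsub : ∀ e ∈ EC, e ⊆ X) (hunif : IsUniform (n - 2) EC) (hC : ¬ Colorable2 EC)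
    (u v : Fin n → ℕ) (hu : Function.Injective u) (hv : Function.Injective v)
    (huv : ∀ i j, u i ≠ v j) (huX : ∀ i, u i ∉ X) (hvX : ∀ i, v i ∉ X) :
    ∀ χ : ℕ → Bool,
      (∃ i : Fin n, ∃ e ∈ EC, Mono χ (insert (u i) (insert (v i) e))) ∨
      Mono χ (Finset.univ.image u) ∨
      (∃ K : Finset (Fin n), Odd K.card ∧ K.card ≤ n / 2 ∧
        Mono χ (K.image u ∪ (Finset.univ \ K).image v)) ∨
      (∃ K : Finset (Fin n), Even K.card ∧ 2 ≤ K.card ∧ K.card ≤ n / 2 ∧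
        Mono χ (K.image v ∪ (Finset.univ \ K).image u)) := by
  intro χ
  have hCe : ∃ e ∈ EC, (∀ x ∈ e, χ x = true) ∨ (∀ x ∈ e, χ x = false) := by
    by_contra hcon
    push_neg at hcon
    apply hC
    refine ⟨χ, fun e he => ?_⟩
    obtain ⟨h1, h2⟩ := hcon e he
    simp only [not_forall, Bool.not_eq_true, Bool.not_eq_false] at h1 h2
    obtain ⟨x1, hx1, hχ1⟩ := h1
    obtain ⟨x2, hx2, hχ2⟩ := h2
    exact ⟨⟨x2, hx2, hχ2⟩, ⟨x1, hx1, hχ1⟩⟩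
  obtain ⟨e, he, hmono⟩ := hCe
  rcases hmono with hT | hF
  · by_cases hex : ∃ i : Fin n, χ (u i) = true ∧ χ (v i) = true
    · obtain ⟨i, h1, h2⟩ := hex
      refine Or.inl ⟨i, e, he, Or.inl ?_⟩
      intro x hx
      rcases Finset.mem_insert.1 hx with rfl | hx
      · exact h1
      rcases Finset.mem_insert.1 hx with rfl | hx
      · exact h2
      · exact hT x hx
    · push_neg at hex
      have h' : ∀ i : Fin n, χ (u i) ≠ true ∨ χ (v i) ≠ true := by
        intro i
        by_cases h1 : χ (u i) = true
        · exact Or.inr (hex i h1)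
        · exact Or.inl h1
      exact Or.inr (ah_key n hn u v χ true h')
  · by_cases hex : ∃ i : Fin n, χ (u i) = false ∧ χ (v i) = false
    · obtain ⟨i, h1, h2⟩ := hex
      refine Or.inl ⟨i, e, he, Or.inr ?_⟩
      intro x hx
      rcases Finset.mem_insert.1 hx with rfl | hx
      · exact h1
      rcases Finset.mem_insert.1 hx with rfl | hx
      · exact h2
      · exact hF x hx
    · push_neg at hex
      have h' : ∀ i : Fin n, χ (u i) ≠ false ∨ χ (v i) ≠ false := by
        intro i
        by_cases h1 : χ (u i) = false
        · exact Or.inr (hex i h1)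
        · exact Or.inl h1
      exact Or.inr (ah_key n hn u v χ false h')
end

section
/- Matched-pair coloring lemma: let U = {u_1,...,u_n} and V = {v_1,...,v_n} be disjoint vertex sets, and consider the hypergraph with hyperedges U, U_K ∪ (V∖V_K) for all K ⊆ {1,...,n} with |K| odd and |K| ≤ ⌊n/2⌋, and V_K ∪ (U∖U_K) for all K with |K| even and 2 ≤ |K| ≤ ⌊n/2⌋. If a Red/Blue coloring χ of U ∪ V has the property that there do not exist two indices i ≠ j with u_i, v_i both Red and u_j, v_j both Blue, then some hyperedge of this hypergraph is monochromatic under χ. -/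
/-!
Some color `c` meets every pair `{u i, v i}`: if a pair is entirely red, no pair is entirely
blue. Let `A` (resp. `B`) be the indices where `v i` (resp. `u i`) has the other color; these are
disjoint. The hyperedge `U_K ∪ (V ∖ V_K)` has color `c` as soon as `A ⊆ K ⊆ Bᶜ`, and
`V_K ∪ (U ∖ U_K)` as soon as `B ⊆ K ⊆ Aᶜ`; if moreover `A ∪ B` is everything, `K = B`, resp.
`K = A`, gives a hyperedge of the other color. Unless `B` is empty or everything (then `U` is
monochromatic), a count on the parities and sizes of `|A|` and `|B|` shows that one of these
choices meets the constraints on `|K|`.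
-/

open Finset

lemma Mono.of_forall_eq {χ : ℕ → Bool} {s : Finset ℕ} (c : Bool) (h : ∀ x ∈ s, χ x = c) :
    Mono χ s := by
  cases c
  exacts [Or.inr h, Or.inl h]

lemma mono_image_union_image_sdiff {ι : Type*} [Fintype ι] [DecidableEq ι] {u v : ι → ℕ}
    {χ : ℕ → Bool} {K : Finset ι} (c : Bool) (hu : ∀ i ∈ K, χ (u i) = c)
    (hv : ∀ i ∉ K, χ (v i) = c) : Mono χ (K.image u ∪ (univ \ K).image v) := by
  refine Mono.of_forall_eq c fun x hx => ?_
  rcases mem_union.1 hx with hx | hx <;> obtain ⟨i, hi, rfl⟩ := mem_image.1 hx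
  · exact hu i hi
  · exact hv i (mem_sdiff.1 hi).2

lemma exists_forall_eq_or_eq {ι : Type*} (p q : ι → Bool)
    (h : ¬ ∃ i j, i ≠ j ∧ p i = true ∧ q i = true ∧ p j = false ∧ q j = false) :
    ∃ c, ∀ i, p i = c ∨ q i = c := by
  by_cases hred : ∃ i, p i = true ∧ q i = true
  · obtain ⟨i, hpi, hqi⟩ := hred
    refine ⟨true, fun j => ?_⟩
    by_contra! hj
    simp only [ne_eq, Bool.not_eq_true] at hj
    exact h ⟨i, j, by rintro rfl; simp_all, hpi, hqi, hj⟩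
  · push Not at hred
    refine ⟨false, fun j => ?_⟩
    cases hpj : p j
    · exact Or.inl rfl
    · exact Or.inr (by simpa using hred j hpj)

lemma matched_pair_card_cases {n a b : ℕ} (hab : a + b ≤ n) (hb : 0 < b) (hbn : b < n) :
    (∃ k, Odd k ∧ a ≤ k ∧ k + b ≤ n ∧ k ≤ n / 2) ∨
    (∃ k, Even k ∧ 2 ≤ k ∧ b ≤ k ∧ a + k ≤ n ∧ k ≤ n / 2) ∨
    (a + b = n ∧ (Odd b ∧ b ≤ n / 2 ∨ Even a ∧ 2 ≤ a ∧ a ≤ n / 2)) := by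
  simp only [Nat.odd_iff, Nat.even_iff]
  rcases le_or_gt a b with hle | hlt
  · rcases Nat.mod_two_eq_zero_or_one a with ha | ha
    · by_cases hn : a + b = n
      · exact Or.inr (Or.inr (by omega))
      · by_cases hsmall : 2 * a + 2 ≤ n
        · exact Or.inl ⟨a + 1, by omega⟩
        · -- then `n = 2a + 1` and `b = a`
          exact Or.inr (Or.inl ⟨b, by omega⟩)
    · exact Or.inl ⟨a, by omega⟩
  · rcases Nat.mod_two_eq_zero_or_one b with hb' | hb'
    · exact Or.inr (Or.inl ⟨b, by omega⟩)
    · by_cases hn : a + b = n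
      · exact Or.inr (Or.inr (by omega))
      · exact Or.inr (Or.inl ⟨b + 1, by omega⟩)

lemma matched_pair_of_forall_eq_or_eq {n : ℕ} {u v : Fin n → ℕ} {χ : ℕ → Bool} (c : Bool)
    (hc : ∀ i, χ (u i) = c ∨ χ (v i) = c) :
    Mono χ (univ.image u) ∨
    (∃ K : Finset (Fin n), Odd #K ∧ #K ≤ n / 2 ∧ Mono χ (K.image u ∪ (univ \ K).image v)) ∨
    (∃ K : Finset (Fin n), Even #K ∧ 2 ≤ #K ∧ #K ≤ n / 2 ∧
      Mono χ (K.image v ∪ (univ \ K).image u)) := by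
  set A := univ.filter fun i => χ (v i) ≠ c
  set B := univ.filter fun i => χ (u i) ≠ c
  have hvA : ∀ i ∉ A, χ (v i) = c := by simp [A]
  have hvA' : ∀ i ∈ A, χ (v i) = !c := fun i hi => Bool.eq_not.2 (mem_filter.1 hi).2
  have huB : ∀ i ∉ B, χ (u i) = c := by simp [B]
  have huB' : ∀ i ∈ B, χ (u i) = !c := fun i hi => Bool.eq_not.2 (mem_filter.1 hi).2
  have hAB : Disjoint A B := disjoint_filter.2 fun i _ hv hu => (hc i).elim hu hv
  have hcard : #A + #B ≤ n := by
    simpa [card_union_of_disjoint hAB] using card_le_univ (A ∪ B)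
  have hcover (hn : #A + #B = n) (i : Fin n) : i ∈ A ∨ i ∈ B := by
    rw [← mem_union, eq_univ_of_card (A ∪ B) (by simp [card_union_of_disjoint hAB, hn])]
    exact mem_univ i
  rcases Nat.eq_zero_or_pos #B with hB0 | hBpos
  · refine Or.inl (Mono.of_forall_eq c fun x hx => ?_)
    obtain ⟨i, -, rfl⟩ := mem_image.1 hx
    exact huB i (by simp [card_eq_zero.1 hB0])
  rcases (card_le_univ B).eq_or_lt with hBn | hBn
  · rw [Fintype.card_fin] at hBn
    have hBuniv : B = univ := eq_univ_of_card B (by simpa using hBn)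
    refine Or.inl (Mono.of_forall_eq (!c) fun x hx => ?_)
    obtain ⟨i, -, rfl⟩ := mem_image.1 hx
    exact huB' i (hBuniv ▸ mem_univ i)
  rw [Fintype.card_fin] at hBn
  rcases matched_pair_card_cases hcard hBpos hBn with
    ⟨k, hk, hAk, hkB, hkn⟩ | ⟨k, hk, hk2, hBk, hAk, hkn⟩ | ⟨hn, ⟨hB, hBn2⟩ | ⟨hA, hA2, hAn⟩⟩
  · obtain ⟨K, hAK, hKB, rfl⟩ := exists_subsuperset_card_eq
      (subset_sdiff.2 ⟨subset_univ A, hAB⟩) hAk (by rw [card_univ_sdiff, Fintype.card_fin]; omega)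
    exact Or.inr (Or.inl ⟨K, hk, hkn, mono_image_union_image_sdiff c
      (fun i hi => huB i (mem_sdiff.1 (hKB hi)).2) (fun i hi => hvA i fun h => hi (hAK h))⟩)
  · obtain ⟨K, hBK, hKA, rfl⟩ := exists_subsuperset_card_eq
      (subset_sdiff.2 ⟨subset_univ B, hAB.symm⟩) hBk (by rw [card_univ_sdiff, Fintype.card_fin]; omega)
    exact Or.inr (Or.inr ⟨K, hk, hk2, hkn, mono_image_union_image_sdiff c
      (fun i hi => hvA i (mem_sdiff.1 (hKA hi)).2) (fun i hi => huB i fun h => hi (hBK h))⟩)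
  · exact Or.inr (Or.inl ⟨B, hB, hBn2, mono_image_union_image_sdiff (!c) huB'
      (fun i hi => hvA' i ((hcover hn i).resolve_right hi))⟩)
  · exact Or.inr (Or.inr ⟨A, hA, hA2, hAn, mono_image_union_image_sdiff (!c) hvA'
      (fun i hi => huB' i ((hcover hn i).resolve_left hi))⟩)

theorem matched_pair_lemma_general
    (n : ℕ) (u v : Fin n → ℕ) (χ : ℕ → Bool)
    (hχ : ¬ ∃ i j : Fin n, i ≠ j ∧ χ (u i) = true ∧ χ (v i) = true ∧
      χ (u j) = false ∧ χ (v j) = false) :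
    Mono χ (Finset.univ.image u) ∨
    (∃ K : Finset (Fin n), Odd K.card ∧ K.card ≤ n / 2 ∧
      Mono χ (K.image u ∪ (Finset.univ \ K).image v)) ∨
    (∃ K : Finset (Fin n), Even K.card ∧ 2 ≤ K.card ∧ K.card ≤ n / 2 ∧
      Mono χ (K.image v ∪ (Finset.univ \ K).image u)) := by
  obtain ⟨c, hc⟩ := exists_forall_eq_or_eq (χ ∘ u) (χ ∘ v) hχ
  exact matched_pair_of_forall_eq_or_eq c hc

/-- Matched-pair coloring lemma: if there are no two indices `i ≠ j` with `u i, v i`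
both Red and `u j, v j` both Blue, then one of the hyperedges `U`,
`U_K ∪ (V ∖ V_K)` (`|K|` odd, `|K| ≤ ⌊n/2⌋`), `V_K ∪ (U ∖ U_K)` (`|K|` even,
`2 ≤ |K| ≤ ⌊n/2⌋`) is monochromatic. -/
theorem matched_pair_lemma
    (n : ℕ) (u v : Fin n → ℕ) (hu : Function.Injective u) (hv : Function.Injective v)
    (huv : ∀ i j, u i ≠ v j) (χ : ℕ → Bool)
    (hχ : ¬ ∃ i j : Fin n, i ≠ j ∧ χ (u i) = true ∧ χ (v i) = true ∧
      χ (u j) = false ∧ χ (v j) = false) :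
    Mono χ (Finset.univ.image u) ∨
    (∃ K : Finset (Fin n), Odd K.card ∧ K.card ≤ n / 2 ∧
      Mono χ (K.image u ∪ (Finset.univ \ K).image v)) ∨
    (∃ K : Finset (Fin n), Even K.card ∧ 2 ≤ K.card ∧ K.card ≤ n / 2 ∧
      Mono χ (K.image v ∪ (Finset.univ \ K).image u)) :=
  matched_pair_lemma_general n u v χ hχ
end

section
/- For odd n ≥ 3, m(n) ≤ (n+4) · 2^{n-3} + (n-2) · m(n-2). -/
open Finset


def gset (u v : ℕ → ℕ) (k : ℕ) (J : Finset ℕ) : Finset ℕ :=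
  J.image u ∪ ((Finset.range k) \ J).image v

def oddify (k : ℕ) (Q : Finset ℕ) : Finset ℕ :=
  if Odd Q.card then Q else insert (k-1) Q

lemma oddify_spec {k : ℕ} (hk : 1 ≤ k) {Q : Finset ℕ} (hQ : Q ⊆ Finset.range (k-1)) :
    oddify k Q ⊆ Finset.range k ∧ Odd (oddify k Q).card := by
  unfold oddify
  have hsub : Q ⊆ Finset.range k := hQ.trans (Finset.range_subset_range.mpr (by omega))
  split_ifs with h
  · exact ⟨hsub, h⟩
  · have hne : (k-1) ∉ Q := fun hc => by have := Finset.mem_range.mp (hQ hc); omega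
    constructor
    · intro x hx
      rcases Finset.mem_insert.mp hx with rfl | hx
      · exact Finset.mem_range.mpr (by omega)
      · exact hsub hx
    · rw [Finset.card_insert_of_notMem hne]
      rw [Nat.odd_iff] at h ⊢
      omega

lemma exists_oddrep {k : ℕ} {J : Finset ℕ} (hJ : J ⊆ Finset.range k) (hodd : Odd J.card) :
    ∃ Q ⊆ Finset.range (k-1), oddify k Q = J := by
  by_cases h : k - 1 ∈ J
  · refine ⟨J.erase (k-1), ?_, ?_⟩
    · intro x hx
      have h1 := Finset.mem_erase.mp hx
      have h2 := Finset.mem_range.mp (hJ h1.2)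
      exact Finset.mem_range.mpr (by omega)
    · have hcard : (J.erase (k-1)).card = J.card - 1 := Finset.card_erase_of_mem h
      have h1 : 1 ≤ J.card := Finset.card_pos.mpr ⟨_, h⟩
      have hno : ¬ Odd (J.erase (k-1)).card := by
        rw [Nat.odd_iff] at hodd ⊢; rw [hcard]; omega
      rw [oddify, if_neg hno, Finset.insert_erase h]
  · refine ⟨J, ?_, by rw [oddify, if_pos hodd]⟩
    intro x hx
    have h2 := Finset.mem_range.mp (hJ hx)
    have h3 : x ≠ k - 1 := fun e => h (e ▸ hx)
    exact Finset.mem_range.mpr (by omega)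

lemma mem_gset {u v : ℕ → ℕ} {k : ℕ} {J : Finset ℕ} {x : ℕ} :
    x ∈ gset u v k J ↔ (∃ i ∈ J, u i = x) ∨ ∃ i ∈ Finset.range k \ J, v i = x := by
  simp [gset, Finset.mem_union, Finset.mem_image]

lemma gadget_half {k : ℕ} (hk : Odd k) (χ : ℕ → Bool) (u v : ℕ → ℕ)
    (h : ∀ i < k, χ (u i) = true ∨ χ (v i) = true) :
    ∃ J ⊆ Finset.range k, Odd J.card ∧
      ((∀ x ∈ gset u v k J, χ x = true) ∨ (∀ x ∈ gset u v k J, χ x = false)) := by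
  classical
  set K := (Finset.range k).filter (fun i => χ (u i) = true) with hK
  set S := (Finset.range k).filter (fun i => χ (v i) = false) with hS
  have hSK : S ⊆ K := by
    intro i hi
    simp only [hS, Finset.mem_filter, Finset.mem_range] at hi
    simp only [hK, Finset.mem_filter, Finset.mem_range]
    refine ⟨hi.1, (h i hi.1).resolve_right ?_⟩
    simp [hi.2]
  have hKsub : K ⊆ Finset.range k := Finset.filter_subset _ _
  by_cases heq : S = K
  · by_cases hoddK : Odd K.card
    · refine ⟨K, hKsub, hoddK, Or.inl ?_⟩
      intro x hx
      rcases mem_gset.mp hx with ⟨i, hi, rfl⟩ | ⟨i, hi, rfl⟩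
      · exact (Finset.mem_filter.mp hi).2
      · have hi2 := Finset.mem_sdiff.mp hi
        have hiS : i ∉ S := heq ▸ hi2.2
        have : ¬ (χ (v i) = false) := fun hc =>
          hiS (Finset.mem_filter.mpr ⟨hi2.1, hc⟩)
        simpa using this
    · refine ⟨Finset.range k \ K, Finset.sdiff_subset, ?_, Or.inr ?_⟩
      · rw [Finset.card_sdiff_of_subset hKsub, Finset.card_range]
        have hle := Finset.card_le_card hKsub
        rw [Finset.card_range] at hle
        rw [Nat.odd_iff] at hk ⊢
        rw [Nat.odd_iff] at hoddK
        omega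
      · intro x hx
        rcases mem_gset.mp hx with ⟨i, hi, rfl⟩ | ⟨i, hi, rfl⟩
        · have hi2 := Finset.mem_sdiff.mp hi
          have : ¬ (χ (u i) = true) := fun hc =>
            hi2.2 (Finset.mem_filter.mpr ⟨hi2.1, hc⟩)
          simpa using this
        · have hi2 := Finset.mem_sdiff.mp hi
          have hiK : i ∈ K := by
            have := hi2.2
            rw [Finset.mem_sdiff] at this
            push_neg at this
            exact this hi2.1
          have hiS : i ∈ S := heq ▸ hiK
          exact (Finset.mem_filter.mp hiS).2
  · have hss : S ⊂ K := hSK.ssubset_of_ne heq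
    obtain ⟨x, hxK, hxS⟩ := Finset.exists_of_ssubset hss
    set J := if Odd S.card then S else insert x S with hJdef
    have hSJ : S ⊆ J := by
      rw [hJdef]; split_ifs
      · exact Finset.Subset.refl _
      · exact Finset.subset_insert _ _
    have hJK : J ⊆ K := by
      rw [hJdef]; split_ifs
      · exact hSK
      · exact Finset.insert_subset hxK hSK
    have hJodd : Odd J.card := by
      rw [hJdef]; split_ifs with h'
      · exact h'
      · rw [Finset.card_insert_of_notMem hxS]
        rw [Nat.odd_iff] at h' ⊢
        omega
    refine ⟨J, hJK.trans hKsub, hJodd, Or.inl ?_⟩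
    intro y hy
    rcases mem_gset.mp hy with ⟨i, hi, rfl⟩ | ⟨i, hi, rfl⟩
    · exact (Finset.mem_filter.mp (hJK hi)).2
    · have hi2 := Finset.mem_sdiff.mp hi
      have hiS : i ∉ S := fun hc => hi2.2 (hSJ hc)
      have : ¬ (χ (v i) = false) := fun hc =>
        hiS (Finset.mem_filter.mpr ⟨hi2.1, hc⟩)
      simpa using this

lemma gadget {k : ℕ} (hk : Odd k) (χ : ℕ → Bool) (u v : ℕ → ℕ) :
    (∃ J ⊆ Finset.range k, Odd J.card ∧
      ((∀ x ∈ gset u v k J, χ x = true) ∨ (∀ x ∈ gset u v k J, χ x = false))) ∨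
    ((∃ i < k, χ (u i) = true ∧ χ (v i) = true) ∧
     (∃ i < k, χ (u i) = false ∧ χ (v i) = false)) := by
  by_cases hF : ∃ i < k, χ (u i) = false ∧ χ (v i) = false
  · by_cases hT : ∃ i < k, χ (u i) = true ∧ χ (v i) = true
    · exact Or.inr ⟨hT, hF⟩
    · left
      push_neg at hT
      have h : ∀ i < k, (fun x => !(χ x)) (u i) = true ∨ (fun x => !(χ x)) (v i) = true := by
        intro i hi
        have := hT i hi
        cases hu : χ (u i) <;> cases hv : χ (v i) <;> simp_all
      obtain ⟨J, hJ1, hJ2, hJ3⟩ := gadget_half hk (fun x => !(χ x)) u v h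
      refine ⟨J, hJ1, hJ2, ?_⟩
      rcases hJ3 with h3 | h3
      · right; intro y hy; have := h3 y hy; simpa using this
      · left; intro y hy; have := h3 y hy; simpa using this
  · left
    push_neg at hF
    have h : ∀ i < k, χ (u i) = true ∨ χ (v i) = true := by
      intro i hi
      have := hF i hi
      cases hu : χ (u i) <;> cases hv : χ (v i) <;> simp_all
    exact gadget_half hk χ u v h


lemma exists_hard (k : ℕ) (hk : 1 ≤ k) :
    ∃ E : Finset (Finset ℕ), IsUniform k E ∧ ¬ Colorable2 E := by
  classical
  refine ⟨(Finset.range (2*k-1)).powersetCard k, ?_, ?_⟩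
  · intro e he
    exact (Finset.mem_powersetCard.mp he).2
  · rintro ⟨χ, hχ⟩
    set T := (Finset.range (2*k-1)).filter (fun x => χ x = true) with hT
    set F := (Finset.range (2*k-1)).filter (fun x => ¬ (χ x = true)) with hF
    have hsum : T.card + F.card = 2*k-1 := by
      rw [hT, hF, Finset.card_filter_add_card_filter_not, Finset.card_range]
    have hcase : k ≤ T.card ∨ k ≤ F.card := by omega
    rcases hcase with hcase | hcase
    · obtain ⟨t, ht1, ht2⟩ := Finset.exists_subset_card_eq hcase
      have hmem : t ∈ (Finset.range (2*k-1)).powersetCard k :=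
        Finset.mem_powersetCard.mpr ⟨ht1.trans (Finset.filter_subset _ _), ht2⟩
      obtain ⟨-, x, hx, hxf⟩ := hχ t hmem
      have : χ x = true := (Finset.mem_filter.mp (ht1 hx)).2
      simp [this] at hxf
    · obtain ⟨t, ht1, ht2⟩ := Finset.exists_subset_card_eq hcase
      have hmem : t ∈ (Finset.range (2*k-1)).powersetCard k :=
        Finset.mem_powersetCard.mpr ⟨ht1.trans (Finset.filter_subset _ _), ht2⟩
      obtain ⟨⟨x, hx, hxt⟩, -⟩ := hχ t hmem
      have : ¬ (χ x = true) := (Finset.mem_filter.mp (ht1 hx)).2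
      exact this hxt

lemma card_gset {k : ℕ} {u v : ℕ → ℕ}
    (huv : ∀ i j, i < k → j < k → u i ≠ v j)
    (huinj : Function.Injective u) (hvinj : Function.Injective v)
    {J : Finset ℕ} (hJ : J ⊆ Finset.range k) :
    (gset u v k J).card = k := by
  have hdisj : Disjoint (J.image u) (((Finset.range k) \ J).image v) := by
    rw [Finset.disjoint_left]
    rintro x hx1 hx2
    obtain ⟨i, hi, rfl⟩ := Finset.mem_image.mp hx1
    obtain ⟨j, hj, hji⟩ := Finset.mem_image.mp hx2
    have hik : i < k := Finset.mem_range.mp (hJ hi)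
    have hjk : j < k := Finset.mem_range.mp (Finset.mem_sdiff.mp hj).1
    exact huv i j hik hjk hji.symm
  rw [gset, Finset.card_union_of_disjoint hdisj, Finset.card_image_of_injective _ huinj,
    Finset.card_image_of_injective _ hvinj, Finset.card_sdiff_of_subset hJ, Finset.card_range]
  have := Finset.card_le_card hJ
  rw [Finset.card_range] at this
  omega


/-- Second improved recurrence (odd case): for odd `n ≥ 3`,
`m n ≤ (n+4) * 2^(n-3) + (n-2) * m (n-2)`. -/
theorem second_improvement_odd (n : ℕ) (hn : 3 ≤ n) (hodd : Odd n) :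
    m n ≤ (n + 4) * 2 ^ (n - 3) + (n - 2) * m (n - 2) := by
  classical
  set k := n - 2 with hkdef
  have hk1 : 1 ≤ k := by omega
  have hkodd : Odd k := by
    rcases hodd with ⟨t, ht⟩; exact ⟨t - 1, by omega⟩
  have hne : {c | ∃ E : Finset (Finset ℕ), IsUniform k E ∧ ¬ Colorable2 E ∧ E.card = c}.Nonempty := by
    obtain ⟨E₀, h1, h2⟩ := exists_hard k hk1
    exact ⟨E₀.card, E₀, h1, h2, rfl⟩
  obtain ⟨C₀, hCu, hCc, hCcard'⟩ := Nat.sInf_mem hne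
  have hCcard : C₀.card = m k := hCcard'
  set M := C₀.sup (fun s => s.sup id) + 1 with hMdef
  have hMb : ∀ e ∈ C₀, ∀ x ∈ e, x < M := by
    intro e he x hx
    have h1 : x ≤ e.sup id := Finset.le_sup (f := id) hx
    have h2 : e.sup id ≤ C₀.sup (fun s => s.sup id) :=
      Finset.le_sup (f := fun s => s.sup id) he
    omega
  set u : ℕ → ℕ := fun i => M + i with hu
  set v : ℕ → ℕ := fun i => M + n + i with hv
  set u' : ℕ → ℕ := fun j => M + 2*n + j with hu'
  set v' : ℕ → ℕ := fun j => M + 3*n + j with hv'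
  set E1 := (Finset.range k ×ˢ C₀).image
      (fun p => insert (u' p.1) (insert (v' p.1) p.2)) with hE1
  set E2 := ((Finset.range n) ×ˢ (Finset.range (k-1)).powerset).image
      (fun p => gset u' v' k (oddify k p.2) ∪ {u p.1, v p.1}) with hE2
  set E3 := ((Finset.range (n-1)).powerset).image
      (fun Q => gset u v n (oddify n Q)) with hE3
  set E := E1 ∪ E2 ∪ E3 with hE
  -- basic injectivity / separation facts
  have huinj : Function.Injective u := by intro a b hab; simp only [hu] at hab; omega
  have hvinj : Function.Injective v := by intro a b hab; simp only [hv] at hab; omega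
  have hu'inj : Function.Injective u' := by intro a b hab; simp only [hu'] at hab; omega
  have hv'inj : Function.Injective v' := by intro a b hab; simp only [hv'] at hab; omega
  have huv : ∀ i j, i < n → j < n → u i ≠ v j := by
    intro i j hi hj; simp only [hu, hv]; omega
  have hu'v' : ∀ i j, i < k → j < k → u' i ≠ v' j := by
    intro i j hi hj; simp only [hu', hv']; omega
  -- core of E2 edges lies high, pads lie low
  have hcore_bound : ∀ (Q : Finset ℕ), Q ⊆ Finset.range k →
      ∀ x ∈ gset u' v' k Q, M + 2*n ≤ x := by
    intro Q hQ x hx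
    rcases mem_gset.mp hx with ⟨i, _, rfl⟩ | ⟨i, _, rfl⟩
    · simp only [hu']; omega
    · simp only [hv']; omega
  -- uniformity
  have hEu : IsUniform n E := by
    intro e he
    rw [hE, Finset.mem_union, Finset.mem_union] at he
    rcases he with (he | he) | he
    · obtain ⟨p, hp, rfl⟩ := Finset.mem_image.mp he
      rw [Finset.mem_product] at hp
      have hpk : p.1 < k := Finset.mem_range.mp hp.1
      have hp2 : p.2 ∈ C₀ := hp.2
      have h1 : v' p.1 ∉ p.2 := by
        intro hc
        have := hMb _ hp2 _ hc
        simp only [hv'] at this; omega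
      have h2 : u' p.1 ∉ insert (v' p.1) p.2 := by
        intro hc
        rcases Finset.mem_insert.mp hc with hc | hc
        · simp only [hu', hv'] at hc; omega
        · have := hMb _ hp2 _ hc
          simp only [hu'] at this; omega
      rw [Finset.card_insert_of_notMem h2, Finset.card_insert_of_notMem h1, hCu _ hp2]
      omega
    · obtain ⟨p, hp, rfl⟩ := Finset.mem_image.mp he
      rw [Finset.mem_product] at hp
      have hp1 : p.1 < n := Finset.mem_range.mp hp.1
      have hp2 : p.2 ⊆ Finset.range (k-1) := Finset.mem_powerset.mp hp.2
      obtain ⟨hQsub, _⟩ := oddify_spec hk1 hp2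
      have hcore : (gset u' v' k (oddify k p.2)).card = k :=
        card_gset hu'v' hu'inj hv'inj hQsub
      have hdisj : Disjoint (gset u' v' k (oddify k p.2)) {u p.1, v p.1} := by
        rw [Finset.disjoint_right]
        intro x hx hx2
        have hb := hcore_bound _ hQsub x hx2
        rcases Finset.mem_insert.mp hx with rfl | hx
        · simp only [hu] at hb; omega
        · have : x = v p.1 := Finset.mem_singleton.mp hx
          subst this
          simp only [hv] at hb; omega
      have hpair : ({u p.1, v p.1} : Finset ℕ).card = 2 := by
        rw [Finset.card_pair (huv _ _ hp1 hp1)]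
      rw [Finset.card_union_of_disjoint hdisj, hcore, hpair]
      omega
    · obtain ⟨Q, hQ, rfl⟩ := Finset.mem_image.mp he
      have hQ2 : Q ⊆ Finset.range (n-1) := Finset.mem_powerset.mp hQ
      obtain ⟨hQsub, _⟩ := oddify_spec (by omega : 1 ≤ n) hQ2
      exact card_gset huv huinj hvinj hQsub
  -- non-2-colorability
  have hEc : ¬ Colorable2 E := by
    rintro ⟨χ, hχ⟩
    rcases gadget hodd χ u v with ⟨J, hJ, hJodd, hmono⟩ | ⟨⟨iT, hiT, hT⟩, ⟨iF, hiF, hF⟩⟩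
    · obtain ⟨Q, hQ, hQeq⟩ := exists_oddrep hJ hJodd
      have hmem : gset u v n J ∈ E := by
        rw [hE]
        refine Finset.mem_union_right _ (Finset.mem_image.mpr ⟨Q, Finset.mem_powerset.mpr hQ, ?_⟩)
        rw [hQeq]
      obtain ⟨⟨x, hx, hxt⟩, ⟨y, hy, hyf⟩⟩ := hχ _ hmem
      rcases hmono with hm | hm
      · have := hm y hy; simp [hyf] at this
      · have := hm x hx; simp [hxt] at this
    · rcases gadget hkodd χ u' v' with ⟨Q, hQ, hQodd, hmono⟩ | ⟨⟨jT, hjT, hjT2⟩, ⟨jF, hjF, hjF2⟩⟩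
      · obtain ⟨Q', hQ', hQ'eq⟩ := exists_oddrep hQ hQodd
        rcases hmono with hm | hm
        · -- all true; pad with (u iT, v iT)
          have hmem : gset u' v' k Q ∪ {u iT, v iT} ∈ E := by
            rw [hE]
            refine Finset.mem_union_left _ (Finset.mem_union_right _ (Finset.mem_image.mpr
              ⟨(iT, Q'), Finset.mem_product.mpr
                ⟨Finset.mem_range.mpr hiT, Finset.mem_powerset.mpr hQ'⟩, ?_⟩))
            simp only
            rw [hQ'eq]
          obtain ⟨-, ⟨y, hy, hyf⟩⟩ := hχ _ hmem
          rcases Finset.mem_union.mp hy with hy | hy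
          · have := hm y hy; simp [hyf] at this
          · rcases Finset.mem_insert.mp hy with rfl | hy
            · rw [hT.1] at hyf; exact absurd hyf (by simp)
            · have : y = v iT := Finset.mem_singleton.mp hy
              subst this
              rw [hT.2] at hyf; exact absurd hyf (by simp)
        · -- all false; pad with (u iF, v iF)
          have hmem : gset u' v' k Q ∪ {u iF, v iF} ∈ E := by
            rw [hE]
            refine Finset.mem_union_left _ (Finset.mem_union_right _ (Finset.mem_image.mpr
              ⟨(iF, Q'), Finset.mem_product.mpr
                ⟨Finset.mem_range.mpr hiF, Finset.mem_powerset.mpr hQ'⟩, ?_⟩))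
            simp only
            rw [hQ'eq]
          obtain ⟨⟨x, hx, hxt⟩, -⟩ := hχ _ hmem
          rcases Finset.mem_union.mp hx with hx | hx
          · have := hm x hx; simp [hxt] at this
          · rcases Finset.mem_insert.mp hx with rfl | hx
            · rw [hF.1] at hxt; exact absurd hxt (by simp)
            · have : x = v iF := Finset.mem_singleton.mp hx
              subst this
              rw [hF.2] at hxt; exact absurd hxt (by simp)
      · -- both prime pairs exist; use the core hypergraph
        have hbad : ¬ ∀ e ∈ C₀, (∃ x ∈ e, χ x = true) ∧ (∃ x ∈ e, χ x = false) :=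
          fun hall => hCc ⟨χ, hall⟩
        push_neg at hbad
        obtain ⟨e, he, hbade⟩ := hbad
        by_cases hex : ∃ x ∈ e, χ x = true
        · have hallt : ∀ x ∈ e, χ x = true := by
            intro x hx
            by_contra hxf
            have hxf' : χ x = false := by
              cases hcx : χ x
              · rfl
              · exact absurd hcx hxf
            exact (hbade hex) x hx hxf'
          have hmem : insert (u' jT) (insert (v' jT) e) ∈ E := by
            rw [hE]
            exact Finset.mem_union_left _ (Finset.mem_union_left _ (Finset.mem_image.mpr
              ⟨(jT, e), Finset.mem_product.mpr ⟨Finset.mem_range.mpr hjT, he⟩, rfl⟩))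
          obtain ⟨-, ⟨y, hy, hyf⟩⟩ := hχ _ hmem
          rcases Finset.mem_insert.mp hy with rfl | hy
          · rw [hjT2.1] at hyf; exact absurd hyf (by simp)
          · rcases Finset.mem_insert.mp hy with rfl | hy
            · rw [hjT2.2] at hyf; exact absurd hyf (by simp)
            · have := hallt y hy; simp [hyf] at this
        · have hallf : ∀ x ∈ e, χ x = false := by
            intro x hx
            cases hcx : χ x
            · rfl
            · exact absurd ⟨x, hx, hcx⟩ hex
          have hmem : insert (u' jF) (insert (v' jF) e) ∈ E := by
            rw [hE]
            exact Finset.mem_union_left _ (Finset.mem_union_left _ (Finset.mem_image.mpr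
              ⟨(jF, e), Finset.mem_product.mpr ⟨Finset.mem_range.mpr hjF, he⟩, rfl⟩))
          obtain ⟨⟨x, hx, hxt⟩, -⟩ := hχ _ hmem
          rcases Finset.mem_insert.mp hx with rfl | hx
          · rw [hjF2.1] at hxt; exact absurd hxt (by simp)
          · rcases Finset.mem_insert.mp hx with rfl | hx
            · rw [hjF2.2] at hxt; exact absurd hxt (by simp)
            · have := hallf x hx; simp [hxt] at this
  -- cardinality bounds
  have h1 : m n ≤ E.card := Nat.sInf_le ⟨E, hEu, hEc, rfl⟩
  have hc1 : E1.card ≤ k * m k := by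
    calc E1.card ≤ (Finset.range k ×ˢ C₀).card := Finset.card_image_le
      _ = k * m k := by rw [Finset.card_product, Finset.card_range, hCcard]
  have hc2 : E2.card ≤ n * 2 ^ (k-1) := by
    calc E2.card ≤ ((Finset.range n) ×ˢ (Finset.range (k-1)).powerset).card :=
        Finset.card_image_le
      _ = n * 2 ^ (k-1) := by
        rw [Finset.card_product, Finset.card_range, Finset.card_powerset, Finset.card_range]
  have hc3 : E3.card ≤ 2 ^ (n-1) := by
    calc E3.card ≤ ((Finset.range (n-1)).powerset).card := Finset.card_image_le
      _ = 2 ^ (n-1) := by rw [Finset.card_powerset, Finset.card_range]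
  have hcardE : E.card ≤ k * m k + n * 2 ^ (k-1) + 2 ^ (n-1) := by
    calc E.card ≤ (E1 ∪ E2).card + E3.card := Finset.card_union_le _ _
      _ ≤ E1.card + E2.card + E3.card := by
          have := Finset.card_union_le E1 E2
          omega
      _ ≤ k * m k + n * 2 ^ (k-1) + 2 ^ (n-1) := by omega
  have e1 : k - 1 = n - 3 := by omega
  have e2 : (2:ℕ) ^ (n-1) = 4 * 2 ^ (n-3) := by
    rw [show n - 1 = (n-3) + 2 by omega, pow_add]
    ring
  have e3 : (n + 4) * 2 ^ (n-3) = n * 2 ^ (n-3) + 4 * 2 ^ (n-3) := by ring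
  calc m n ≤ E.card := h1
    _ ≤ k * m k + n * 2 ^ (k-1) + 2 ^ (n-1) := hcardE
    _ = (n + 4) * 2 ^ (n-3) + k * m k := by rw [e1, e2, e3]; ring
end

section
/- The second improved construction is not 2-colorable: with C a non-2-colorable (n-2)-uniform hypergraph, U' = {u'_1,...,u'_{n-2}}, V' = {v'_1,...,v'_{n-2}}, U = {u_1,...,u_n}, V = {v_1,...,v_n} pairwise disjoint and disjoint from the vertices of C, the n-uniform hypergraph with hyperedges (i) {u'_i} ∪ e ∪ {v'_i} for all i and all hyperedges e of C, (ii) U' ∪ {u_i, v_i} for all i, (iii) U'_Q ∪ (V'∖V'_Q) ∪ {u_i, v_i} for |Q| odd ≤ ⌊(n-2)/2⌋ and all i, (iv) V'_Q ∪ (U'∖U'_Q) ∪ {u_i, v_i} for |Q| even, 2 ≤ |Q| ≤ ⌊(n-2)/2⌋, and all i, (v) U, (vi) U_K ∪ (V∖V_K) for |K| odd ≤ ⌊n/2⌋, (vii) V_K ∪ (U∖U_K) for |K| even, 2 ≤ |K| ≤ ⌊n/2⌋, admits no proper 2-coloring. -/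
lemma mono_of_forall (χ : ℕ → Bool) (c : Bool) {s : Finset ℕ}
    (h : ∀ x ∈ s, χ x = c) : Mono χ s := by
  cases c
  · exact Or.inr h
  · exact Or.inl h

/-- The key combinatorial lemma: if `A ∪ B = univ` then either `A` is trivial, or
one can find a set `K` of suitable parity and size squeezed suitably between the
sets `A`, `B` and their complements. -/
lemma core_gadget {ι : Type*} [Fintype ι] [DecidableEq ι] (A B : Finset ι)
    (hU : A ∪ B = Finset.univ) :
    A = Finset.univ ∨ A = ∅ ∨
    (∃ K : Finset ι, Odd K.card ∧ K.card ≤ Fintype.card ι / 2 ∧ Bᶜ ⊆ K ∧ K ⊆ A) ∨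
    (∃ K : Finset ι, Even K.card ∧ 2 ≤ K.card ∧ K.card ≤ Fintype.card ι / 2 ∧ Aᶜ ⊆ K ∧ K ⊆ B) ∨
    (∃ K : Finset ι, Odd K.card ∧ K.card ≤ Fintype.card ι / 2 ∧ B ⊆ K ∧ K ⊆ Aᶜ) ∨
    (∃ K : Finset ι, Even K.card ∧ 2 ≤ K.card ∧ K.card ≤ Fintype.card ι / 2 ∧ A ⊆ K ∧ K ⊆ Bᶜ) := by
  by_cases hA1 : A = Finset.univ
  · exact Or.inl hA1
  by_cases hA0 : A = ∅
  · exact Or.inr (Or.inl hA0)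
  have hBA : Bᶜ ⊆ A := by
    intro x hx
    rcases Finset.mem_union.1 (hU ▸ Finset.mem_univ x) with h | h
    · exact h
    · exact absurd h (Finset.mem_compl.1 hx)
  have hAB : Aᶜ ⊆ B := by
    intro x hx
    rcases Finset.mem_union.1 (hU ▸ Finset.mem_univ x) with h | h
    · exact absurd h (Finset.mem_compl.1 hx)
    · exact h
  have hta : Bᶜ.card ≤ A.card := Finset.card_le_card hBA
  have ht'b : Aᶜ.card ≤ B.card := Finset.card_le_card hAB
  have hcb : Bᶜ.card = Fintype.card ι - B.card := Finset.card_compl B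
  have hca : Aᶜ.card = Fintype.card ι - A.card := Finset.card_compl A
  have ham : A.card < Fintype.card ι := by
    have := Finset.card_lt_card (Finset.ssubset_univ_iff.mpr hA1)
    simpa [Finset.card_univ] using this
  have ha0 : 0 < A.card := Finset.card_pos.2 (Finset.nonempty_iff_ne_empty.2 hA0)
  have hbm : B.card ≤ Fintype.card ι := by
    simpa [Finset.card_univ] using Finset.card_le_univ B
  have hsum : Fintype.card ι ≤ A.card + B.card := by
    have h1 := Finset.card_union_le A B
    rw [hU, Finset.card_univ] at h1
    exact h1
  rcases le_or_gt Bᶜ.card Aᶜ.card with hle | hlt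
  · rcases Nat.even_or_odd Bᶜ.card with hte | hto
    · obtain ⟨w, hw⟩ := hte
      by_cases hcase : Bᶜ.card + 1 ≤ A.card ∧ Bᶜ.card + 1 ≤ Fintype.card ι / 2
      · obtain ⟨K, hK1, hK2, hK3⟩ :=
          Finset.exists_subsuperset_card_eq hBA (Nat.le_succ _) hcase.1
        exact Or.inr (Or.inr (Or.inl ⟨K, ⟨w, by omega⟩, by omega, hK1, hK2⟩))
      · by_cases heq : A.card = Bᶜ.card
        · have hb' : B.card ≤ Aᶜ.card := by omega
          have hBAc : Aᶜ = B := Finset.eq_of_subset_of_card_le hAB hb'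
          refine Or.inr (Or.inr (Or.inr (Or.inr (Or.inr
            ⟨A, ⟨w, by omega⟩, by omega, by omega, subset_rfl, ?_⟩))))
          rw [← hBAc, compl_compl]
        · have h1 : Aᶜ.card ≤ Fintype.card ι / 2 := by omega
          have h2 : Fintype.card ι / 2 ≤ B.card := by omega
          obtain ⟨K, hK1, hK2, hK3⟩ :=
            Finset.exists_subsuperset_card_eq hAB h1 h2
          exact Or.inr (Or.inr (Or.inr (Or.inl
            ⟨K, ⟨w, by omega⟩, by omega, by omega, hK1, hK2⟩)))
    · obtain ⟨w, hw⟩ := hto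
      exact Or.inr (Or.inr (Or.inl ⟨Bᶜ, ⟨w, by omega⟩, by omega, subset_rfl, hBA⟩))
  · rcases Nat.even_or_odd Aᶜ.card with ht'e | ht'o
    · obtain ⟨w, hw⟩ := ht'e
      exact Or.inr (Or.inr (Or.inr (Or.inl
        ⟨Aᶜ, ⟨w, by omega⟩, by omega, by omega, subset_rfl, hAB⟩)))
    · obtain ⟨w, hw⟩ := ht'o
      by_cases hcase : Aᶜ.card + 1 ≤ B.card ∧ Aᶜ.card + 1 ≤ Fintype.card ι / 2
      · obtain ⟨K, hK1, hK2, hK3⟩ :=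
          Finset.exists_subsuperset_card_eq hAB (Nat.le_succ _) hcase.1
        exact Or.inr (Or.inr (Or.inr (Or.inl
          ⟨K, ⟨w + 1, by omega⟩, by omega, by omega, hK1, hK2⟩)))
      · have hbb : B.card ≤ Aᶜ.card := by omega
        have hBAc : Aᶜ = B := Finset.eq_of_subset_of_card_le hAB hbb
        exact Or.inr (Or.inr (Or.inr (Or.inr (Or.inl
          ⟨Aᶜ, ⟨w, by omega⟩, by omega, hBAc.ge, subset_rfl⟩))))

/-- The abstract gadget: if none of the "U", "T_K" and "S_K" patterns on the pair
of vertex families `f`, `g` is monochromatic (in any color), then for each color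
`c` there is an index `j` with both `f j` and `g j` colored `c`. -/
lemma gadget_pair {k : ℕ} (χ : ℕ → Bool) (f g : Fin k → ℕ) (c : Bool)
    (hUm : ∀ c' : Bool, ¬ ∀ j, χ (f j) = c')
    (hT : ∀ c' : Bool, ∀ K : Finset (Fin k), Odd K.card → K.card ≤ k / 2 →
          ¬ ((∀ j ∈ K, χ (f j) = c') ∧ (∀ j ∉ K, χ (g j) = c')))
    (hS : ∀ c' : Bool, ∀ K : Finset (Fin k), Even K.card → 2 ≤ K.card → K.card ≤ k / 2 →
          ¬ ((∀ j ∈ K, χ (g j) = c') ∧ (∀ j ∉ K, χ (f j) = c'))) :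
    ∃ j, χ (f j) = c ∧ χ (g j) = c := by
  by_contra hno
  push_neg at hno
  have bnot : ∀ x y : Bool, x ≠ y → x = !y := by decide
  set A : Finset (Fin k) := Finset.univ.filter (fun j => χ (f j) = !c) with hA
  set B : Finset (Fin k) := Finset.univ.filter (fun j => χ (g j) = !c) with hB
  have hmemA : ∀ j, j ∈ A ↔ χ (f j) = !c := by intro j; simp [hA]
  have hmemB : ∀ j, j ∈ B ↔ χ (g j) = !c := by intro j; simp [hB]
  have hnotA : ∀ j, j ∉ A → χ (f j) = c := by
    intro j hj
    have := bnot _ _ (fun h => hj ((hmemA j).2 h))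
    simpa using this
  have hnotB : ∀ j, j ∉ B → χ (g j) = c := by
    intro j hj
    have := bnot _ _ (fun h => hj ((hmemB j).2 h))
    simpa using this
  have hUu : A ∪ B = Finset.univ := by
    ext j
    simp only [Finset.mem_union, hmemA, hmemB, Finset.mem_univ, iff_true]
    by_cases hf : χ (f j) = c
    · exact Or.inr (bnot _ _ (hno j hf))
    · exact Or.inl (bnot _ _ hf)
  have hcard : Fintype.card (Fin k) = k := Fintype.card_fin k
  rcases core_gadget A B hUu with h | h |
      ⟨K, hK1, hK2, hK3, hK4⟩ | ⟨K, hK1, hK2, hK3, hK4, hK5⟩ |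
      ⟨K, hK1, hK2, hK3, hK4⟩ | ⟨K, hK1, hK2, hK3, hK4, hK5⟩
  · exact hUm (!c) (fun j => (hmemA j).1 (h ▸ Finset.mem_univ j))
  · exact hUm c (fun j => hnotA j (h ▸ Finset.notMem_empty j))
  · refine hT (!c) K hK1 (by rwa [hcard] at hK2)
      ⟨fun j hj => (hmemA j).1 (hK4 hj), fun j hj => ?_⟩
    have : j ∈ B := by
      by_contra hb
      exact hj (hK3 (Finset.mem_compl.2 hb))
    exact (hmemB j).1 this
  · refine hS (!c) K hK1 hK2 (by rwa [hcard] at hK3)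
      ⟨fun j hj => (hmemB j).1 (hK5 hj), fun j hj => ?_⟩
    have : j ∈ A := by
      by_contra ha
      exact hj (hK4 (Finset.mem_compl.2 ha))
    exact (hmemA j).1 this
  · exact hT c K hK1 (by rwa [hcard] at hK2)
      ⟨fun j hj => hnotA j (Finset.mem_compl.1 (hK4 hj)),
       fun j hj => hnotB j (fun hb => hj (hK3 hb))⟩
  · exact hS c K hK1 hK2 (by rwa [hcard] at hK3)
      ⟨fun j hj => hnotB j (Finset.mem_compl.1 (hK5 hj)),
       fun j hj => hnotA j (fun ha => hj (hK4 ha))⟩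

/-- The second improved construction is not 2-colorable. `EC` is a non-2-colorable
`(n-2)`-uniform core hypergraph on `X`; `u', v' : Fin (n-2) → ℕ` and `u, v : Fin n → ℕ`
give fresh distinct vertices. Every coloring makes one of the hyperedges
(i)–(vii) of the construction monochromatic. -/
theorem second_construction_not_two_colorable
    (n : ℕ) (hn : 3 ≤ n) (X : Finset ℕ) (EC : Finset (Finset ℕ))
    (hsub : ∀ e ∈ EC, e ⊆ X) (hunif : IsUniform (n - 2) EC) (hC : ¬ Colorable2 EC)
    (u' v' : Fin (n - 2) → ℕ) (u v : Fin n → ℕ)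
    (hinj : Function.Injective u' ∧ Function.Injective v' ∧
      Function.Injective u ∧ Function.Injective v)
    (hdisj : (∀ i j, u' i ≠ v' j) ∧ (∀ i j, u' i ≠ u j) ∧ (∀ i j, u' i ≠ v j) ∧
      (∀ i j, v' i ≠ u j) ∧ (∀ i j, v' i ≠ v j) ∧ (∀ i j, u i ≠ v j))
    (hX : (∀ i, u' i ∉ X) ∧ (∀ i, v' i ∉ X) ∧ (∀ i, u i ∉ X) ∧ (∀ i, v i ∉ X)) :
    ∀ χ : ℕ → Bool,
      (∃ i : Fin (n - 2), ∃ e ∈ EC, Mono χ (insert (u' i) (insert (v' i) e))) ∨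
      (∃ i : Fin n, Mono χ (Finset.univ.image u' ∪ {u i, v i})) ∨
      (∃ i : Fin n, ∃ Q : Finset (Fin (n - 2)), Odd Q.card ∧ Q.card ≤ (n - 2) / 2 ∧
        Mono χ (Q.image u' ∪ (Finset.univ \ Q).image v' ∪ {u i, v i})) ∨
      (∃ i : Fin n, ∃ Q : Finset (Fin (n - 2)), Even Q.card ∧ 2 ≤ Q.card ∧
        Q.card ≤ (n - 2) / 2 ∧
        Mono χ (Q.image v' ∪ (Finset.univ \ Q).image u' ∪ {u i, v i})) ∨
      Mono χ (Finset.univ.image u) ∨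
      (∃ K : Finset (Fin n), Odd K.card ∧ K.card ≤ n / 2 ∧
        Mono χ (K.image u ∪ (Finset.univ \ K).image v)) ∨
      (∃ K : Finset (Fin n), Even K.card ∧ 2 ≤ K.card ∧ K.card ≤ n / 2 ∧
        Mono χ (K.image v ∪ (Finset.univ \ K).image u)) := by
  intro χ
  by_contra hcon
  push_neg at hcon
  obtain ⟨h1, h2, h3, h4, h5, h6, h7⟩ := hcon
  -- EC has a monochromatic edge
  have hmonoE : ∃ e ∈ EC, ∃ d : Bool, ∀ x ∈ e, χ x = d := by
    by_contra hcol
    apply hC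
    refine ⟨χ, fun e he => ?_⟩
    constructor
    · by_contra hT
      push_neg at hT
      exact hcol ⟨e, he, false, fun x hx => by simpa using hT x hx⟩
    · by_contra hF
      push_neg at hF
      exact hcol ⟨e, he, true, fun x hx => by simpa using hF x hx⟩
  obtain ⟨e, he, d, hed⟩ := hmonoE
  -- from the (v)-(vii) gadget on u, v : for each color there is a monochromatic pair
  have hpair : ∀ c : Bool, ∃ i : Fin n, χ (u i) = c ∧ χ (v i) = c := by
    intro c
    apply gadget_pair χ u v c
    · intro c' hall
      apply h5
      refine mono_of_forall χ c' ?_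
      intro x hx
      obtain ⟨j, _, rfl⟩ := Finset.mem_image.1 hx
      exact hall j
    · intro c' K hodd hle hfg
      apply h6 K hodd hle
      refine mono_of_forall χ c' ?_
      intro x hx
      rcases Finset.mem_union.1 hx with hx | hx
      · obtain ⟨j, hj, rfl⟩ := Finset.mem_image.1 hx
        exact hfg.1 j hj
      · obtain ⟨j, hj, rfl⟩ := Finset.mem_image.1 hx
        exact hfg.2 j (Finset.mem_sdiff.1 hj).2
    · intro c' K heven h2K hle hfg
      apply h7 K heven h2K hle
      refine mono_of_forall χ c' ?_
      intro x hx
      rcases Finset.mem_union.1 hx with hx | hx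
      · obtain ⟨j, hj, rfl⟩ := Finset.mem_image.1 hx
        exact hfg.1 j hj
      · obtain ⟨j, hj, rfl⟩ := Finset.mem_image.1 hx
        exact hfg.2 j (Finset.mem_sdiff.1 hj).2
  -- from the (ii)-(iv) gadget on u', v' : there is a pair of color d
  have hpair' : ∃ j : Fin (n - 2), χ (u' j) = d ∧ χ (v' j) = d := by
    apply gadget_pair χ u' v' d
    · intro c' hall
      obtain ⟨i, hi1, hi2⟩ := hpair c'
      apply h2 i
      refine mono_of_forall χ c' ?_
      intro x hx
      rcases Finset.mem_union.1 hx with hx | hx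
      · obtain ⟨j, _, rfl⟩ := Finset.mem_image.1 hx
        exact hall j
      · rcases Finset.mem_insert.1 hx with rfl | hx
        · exact hi1
        · rw [Finset.mem_singleton.1 hx]; exact hi2
    · intro c' K hodd hle hfg
      obtain ⟨i, hi1, hi2⟩ := hpair c'
      apply h3 i K hodd hle
      refine mono_of_forall χ c' ?_
      intro x hx
      rcases Finset.mem_union.1 hx with hx | hx
      · rcases Finset.mem_union.1 hx with hx | hx
        · obtain ⟨j, hj, rfl⟩ := Finset.mem_image.1 hx
          exact hfg.1 j hj
        · obtain ⟨j, hj, rfl⟩ := Finset.mem_image.1 hx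
          exact hfg.2 j (Finset.mem_sdiff.1 hj).2
      · rcases Finset.mem_insert.1 hx with rfl | hx
        · exact hi1
        · rw [Finset.mem_singleton.1 hx]; exact hi2
    · intro c' K heven h2K hle hfg
      obtain ⟨i, hi1, hi2⟩ := hpair c'
      apply h4 i K heven h2K hle
      refine mono_of_forall χ c' ?_
      intro x hx
      rcases Finset.mem_union.1 hx with hx | hx
      · rcases Finset.mem_union.1 hx with hx | hx
        · obtain ⟨j, hj, rfl⟩ := Finset.mem_image.1 hx
          exact hfg.1 j hj
        · obtain ⟨j, hj, rfl⟩ := Finset.mem_image.1 hx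
          exact hfg.2 j (Finset.mem_sdiff.1 hj).2
      · rcases Finset.mem_insert.1 hx with rfl | hx
        · exact hi1
        · rw [Finset.mem_singleton.1 hx]; exact hi2
  -- conclude with an edge of type (i)
  obtain ⟨j, hj1, hj2⟩ := hpair'
  apply h1 j e he
  refine mono_of_forall χ d ?_
  intro x hx
  rcases Finset.mem_insert.1 hx with rfl | hx
  · exact hj1
  · rcases Finset.mem_insert.1 hx with rfl | hx
    · exact hj2
    · exact hed x hx
end

section
/- The n = 8 construction is not 2-colorable: let A be a non-2-colorable 5-uniform hypergraph, let B and C be two disjoint copies of the Fano plane (3-uniform, non-2-colorable), all vertex sets pairwise disjoint and disjoint from U = {u_1,...,u_8}, V = {v_1,...,v_8}. Then the 8-uniform hypergraph with hyperedges (i) e_A ∪ e_B for all hyperedges e_A of A and e_B of B, (ii) e_A ∪ e_C for all e_A of A, e_C of C, (iii) {u_i} ∪ e_B ∪ e_C ∪ {v_i} for all 1 ≤ i ≤ 8 and all e_B of B, e_C of C, (iv) U, (v) U_K ∪ (V∖V_K) for |K| odd, 1 ≤ |K| ≤ 3, (vi) V_K ∪ (U∖U_K) for |K| even, 2 ≤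 |K| ≤ 4, is not 2-colorable. -/
lemma mono_of_const {χ : ℕ → Bool} (a : Bool) {s : Finset ℕ} (h : ∀ x ∈ s, χ x = a) :
    Mono χ s := by cases a; exacts [Or.inr h, Or.inl h]

lemma exists_mono {E : Finset (Finset ℕ)} (hE : ¬ Colorable2 E) (χ : ℕ → Bool) :
    ∃ e ∈ E, ∃ a : Bool, ∀ x ∈ e, χ x = a := by
  by_contra hc
  push_neg at hc
  apply hE
  refine ⟨χ, fun e he => ?_⟩
  have h1 := hc e he true
  have h2 := hc e he false
  obtain ⟨x, hx, hx'⟩ := h1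
  obtain ⟨y, hy, hy'⟩ := h2
  exact ⟨⟨y, hy, by simpa using hy'⟩, ⟨x, hx, by simpa using hx'⟩⟩

lemma helper_v (χ : ℕ → Bool) (u v : Fin 8 → ℕ) (a : Bool) (K : Finset (Fin 8))
    (hcard : K.card = 1 ∨ K.card = 3)
    (hKu : ∀ i ∈ K, χ (u i) = a) (hKv : ∀ i ∈ Finset.univ \ K, χ (v i) = a) :
    ∃ K : Finset (Fin 8), Odd K.card ∧ 1 ≤ K.card ∧ K.card ≤ 3 ∧
      Mono χ (K.image u ∪ (Finset.univ \ K).image v) := by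
  refine ⟨K, ?_, ?_, ?_, mono_of_const a ?_⟩
  · rcases hcard with h | h <;> rw [h] <;> decide
  · rcases hcard with h | h <;> omega
  · rcases hcard with h | h <;> omega
  · intro x hx
    rcases Finset.mem_union.1 hx with hx | hx <;>
      obtain ⟨i, hi, rfl⟩ := Finset.mem_image.1 hx
    · exact hKu i hi
    · exact hKv i hi

lemma helper_vi (χ : ℕ → Bool) (u v : Fin 8 → ℕ) (a : Bool) (K : Finset (Fin 8))
    (hcard : K.card = 2 ∨ K.card = 4)
    (hKv : ∀ i ∈ K, χ (v i) = a) (hKu : ∀ i ∈ Finset.univ \ K, χ (u i) = a) :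
    ∃ K : Finset (Fin 8), Even K.card ∧ 2 ≤ K.card ∧ K.card ≤ 4 ∧
      Mono χ (K.image v ∪ (Finset.univ \ K).image u) := by
  refine ⟨K, ?_, ?_, ?_, mono_of_const a ?_⟩
  · rcases hcard with h | h <;> rw [h] <;> decide
  · rcases hcard with h | h <;> omega
  · rcases hcard with h | h <;> omega
  · intro x hx
    rcases Finset.mem_union.1 hx with hx | hx <;>
      obtain ⟨i, hi, rfl⟩ := Finset.mem_image.1 hx
    · exact hKv i hi
    · exact hKu i hi

/-- The `n = 8` construction is not 2-colorable. `EA` is a non-2-colorable 5-uniform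
hypergraph on `VA`, `EB` and `EC` are non-2-colorable 3-uniform hypergraphs (Fano planes)
on `VB` and `VC`; `VA, VB, VC` are pairwise disjoint and disjoint from the fresh vertices
`u, v : Fin 8 → ℕ`. Every coloring makes one of the hyperedges (i)–(vi) monochromatic. -/
theorem eight_construction_not_two_colorable
    (VA VB VC : Finset ℕ) (EA EB EC : Finset (Finset ℕ))
    (hA : (∀ e ∈ EA, e ⊆ VA) ∧ IsUniform 5 EA ∧ ¬ Colorable2 EA)
    (hB : (∀ e ∈ EB, e ⊆ VB) ∧ IsUniform 3 EB ∧ ¬ Colorable2 EB)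
    (hC : (∀ e ∈ EC, e ⊆ VC) ∧ IsUniform 3 EC ∧ ¬ Colorable2 EC)
    (hVdisj : Disjoint VA VB ∧ Disjoint VA VC ∧ Disjoint VB VC)
    (u v : Fin 8 → ℕ) (hu : Function.Injective u) (hv : Function.Injective v)
    (huv : ∀ i j, u i ≠ v j)
    (hfresh : ∀ i, u i ∉ VA ∪ VB ∪ VC ∧ v i ∉ VA ∪ VB ∪ VC) :
    ∀ χ : ℕ → Bool,
      (∃ eA ∈ EA, ∃ eB ∈ EB, Mono χ (eA ∪ eB)) ∨
      (∃ eA ∈ EA, ∃ eC ∈ EC, Mono χ (eA ∪ eC)) ∨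
      (∃ i : Fin 8, ∃ eB ∈ EB, ∃ eC ∈ EC,
        Mono χ (insert (u i) (insert (v i) (eB ∪ eC)))) ∨
      Mono χ (Finset.univ.image u) ∨
      (∃ K : Finset (Fin 8), Odd K.card ∧ 1 ≤ K.card ∧ K.card ≤ 3 ∧
        Mono χ (K.image u ∪ (Finset.univ \ K).image v)) ∨
      (∃ K : Finset (Fin 8), Even K.card ∧ 2 ≤ K.card ∧ K.card ≤ 4 ∧
        Mono χ (K.image v ∪ (Finset.univ \ K).image u)) := by
  intro χ
  obtain ⟨eA, heA, a, ha⟩ := exists_mono hA.2.2 χ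
  obtain ⟨eB, heB, b, hb⟩ := exists_mono hB.2.2 χ
  obtain ⟨eC, heC, c, hc⟩ := exists_mono hC.2.2 χ
  by_cases hab : b = a
  · refine Or.inl ⟨eA, heA, eB, heB, mono_of_const a fun x hx => ?_⟩
    rcases Finset.mem_union.1 hx with hx | hx
    · exact ha x hx
    · rw [hb x hx, hab]
  by_cases hac : c = a
  · refine Or.inr (Or.inl ⟨eA, heA, eC, heC, mono_of_const a fun x hx => ?_⟩)
    rcases Finset.mem_union.1 hx with hx | hx
    · exact ha x hx
    · rw [hc x hx, hac]
  have hflip : ∀ x : Bool, x ≠ a → x = !a := by cases a <;> decide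
  have hb' : ∀ x ∈ eB, χ x = !a := fun x hx => by rw [hb x hx]; exact hflip b hab
  have hc' : ∀ x ∈ eC, χ x = !a := fun x hx => by rw [hc x hx]; exact hflip c hac
  by_cases hiii : ∃ i, χ (u i) = !a ∧ χ (v i) = !a
  · obtain ⟨i, hui, hvi⟩ := hiii
    refine Or.inr (Or.inr (Or.inl ⟨i, eB, heB, eC, heC, mono_of_const (!a) fun x hx => ?_⟩))
    rcases Finset.mem_insert.1 hx with rfl | hx
    · exact hui
    rcases Finset.mem_insert.1 hx with rfl | hx
    · exact hvi
    rcases Finset.mem_union.1 hx with hx | hx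
    · exact hb' x hx
    · exact hc' x hx
  push_neg at hiii
  set T : Finset (Fin 8) := Finset.univ.filter (fun i => χ (u i) = a) with hTdef
  set W : Finset (Fin 8) := Finset.univ.filter (fun i => χ (v i) = a) with hWdef
  have hTmem : ∀ i, i ∈ T ↔ χ (u i) = a := fun i => by simp [hTdef]
  have hWmem : ∀ i, i ∈ W ↔ χ (v i) = a := fun i => by simp [hWdef]
  have hcov : ∀ i, i ∉ T → i ∈ W := by
    intro i hi
    have h1 : χ (u i) = !a := hflip _ (fun h => hi ((hTmem i).2 h))
    have h2 := hiii i h1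
    rw [hWmem]
    have hflip2 : ∀ x : Bool, x ≠ !a → x = a := by cases a <;> decide
    exact hflip2 _ h2
  set S : Finset (Fin 8) := Finset.univ \ W with hSdef
  have hSnotW : ∀ i, i ∈ S → i ∉ W := fun i hi => (Finset.mem_sdiff.1 hi).2
  have hST : S ⊆ T := by
    intro i hi
    by_contra h
    exact hSnotW i hi (hcov i h)
  have hSv : ∀ i, i ∈ S → χ (v i) = !a := by
    intro i hi
    exact hflip _ (fun h => hSnotW i hi ((hWmem i).2 h))
  have hnotSv : ∀ i, i ∉ S → χ (v i) = a := by
    intro i hi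
    have : i ∈ W := by
      by_contra h
      exact hi (Finset.mem_sdiff.2 ⟨Finset.mem_univ i, h⟩)
    exact (hWmem i).1 this
  have hnotTu : ∀ i, i ∉ T → χ (u i) = !a := fun i hi =>
    hflip _ (fun h => hi ((hTmem i).2 h))
  -- card facts
  have hT8 : T.card ≤ 8 := by
    have := Finset.card_le_card (Finset.subset_univ T)
    simpa using this
  have hsd : ∀ K : Finset (Fin 8), (Finset.univ \ K).card = 8 - K.card := by
    intro K
    rw [Finset.card_sdiff_of_subset (Finset.subset_univ K)]
    simp
  -- generic mono-a even case from intermediate K with card 4 or 6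
  have evenA : ∀ K : Finset (Fin 8), S ⊆ K → K ⊆ T → (K.card = 4 ∨ K.card = 6) →
      ∃ K : Finset (Fin 8), Even K.card ∧ 2 ≤ K.card ∧ K.card ≤ 4 ∧
        Mono χ (K.image v ∪ (Finset.univ \ K).image u) := by
    intro K h1 h2 h3
    refine helper_vi χ u v a (Finset.univ \ K) ?_ ?_ ?_
    · rw [hsd K]; omega
    · intro i hi
      exact hnotSv i (fun h => (Finset.mem_sdiff.1 hi).2 (h1 h))
    · intro i hi
      have hiK : i ∈ K := by
        have := (Finset.mem_sdiff.1 hi).2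
        by_contra h
        exact this (Finset.mem_sdiff.2 ⟨Finset.mem_univ i, h⟩)
      exact (hTmem i).1 (h2 hiK)
  have oddA : ∀ K : Finset (Fin 8), S ⊆ K → K ⊆ T → (K.card = 1 ∨ K.card = 3) →
      ∃ K : Finset (Fin 8), Odd K.card ∧ 1 ≤ K.card ∧ K.card ≤ 3 ∧
        Mono χ (K.image u ∪ (Finset.univ \ K).image v) := by
    intro K h1 h2 h3
    refine helper_v χ u v a K h3 (fun i hi => (hTmem i).1 (h2 hi)) ?_
    intro i hi
    exact hnotSv i (fun h => (Finset.mem_sdiff.1 hi).2 (h1 h))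
  -- S = T flip cases
  have flipOdd : S = T → (T.card = 5 ∨ T.card = 7) →
      ∃ K : Finset (Fin 8), Odd K.card ∧ 1 ≤ K.card ∧ K.card ≤ 3 ∧
        Mono χ (K.image u ∪ (Finset.univ \ K).image v) := by
    intro hSeq ht
    refine helper_v χ u v (!a) (Finset.univ \ T) ?_ ?_ ?_
    · rw [hsd T]; omega
    · intro i hi
      exact hnotTu i (Finset.mem_sdiff.1 hi).2
    · intro i hi
      have hiT : i ∈ T := by
        have := (Finset.mem_sdiff.1 hi).2
        by_contra h
        exact this (Finset.mem_sdiff.2 ⟨Finset.mem_univ i, h⟩)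
      exact hSv i (hSeq ▸ hiT)
  have flipEven : S = T → T.card = 2 →
      ∃ K : Finset (Fin 8), Even K.card ∧ 2 ≤ K.card ∧ K.card ≤ 4 ∧
        Mono χ (K.image v ∪ (Finset.univ \ K).image u) := by
    intro hSeq ht
    refine helper_vi χ u v (!a) T (Or.inl ht) ?_ ?_
    · intro i hi
      exact hSv i (hSeq ▸ hi)
    · intro i hi
      exact hnotTu i (Finset.mem_sdiff.1 hi).2
  have hSeqT : T.card ≤ S.card → S = T :=
    fun h => Finset.eq_of_subset_of_card_le hST h ▸ rfl
  -- main case split on T.card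
  by_cases hT0 : T.card = 0
  · have hTe : T = ∅ := Finset.card_eq_zero.1 hT0
    refine Or.inr (Or.inr (Or.inr (Or.inl (mono_of_const (!a) fun x hx => ?_))))
    obtain ⟨i, _, rfl⟩ := Finset.mem_image.1 hx
    exact hnotTu i (by rw [hTe]; exact Finset.notMem_empty i)
  by_cases hT8' : T.card = 8
  · have hTu : T = Finset.univ := Finset.eq_univ_of_card T (by rw [hT8']; simp)
    refine Or.inr (Or.inr (Or.inr (Or.inl (mono_of_const a fun x hx => ?_))))
    obtain ⟨i, _, rfl⟩ := Finset.mem_image.1 hx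
    exact (hTmem i).1 (hTu ▸ Finset.mem_univ i)
  have hsle : S.card ≤ T.card := Finset.card_le_card hST
  rcases (by omega : T.card = 1 ∨ T.card = 2 ∨ T.card = 3 ∨ T.card = 4 ∨ T.card = 5 ∨
      T.card = 6 ∨ T.card = 7) with h | h | h | h | h | h | h
  · exact Or.inr (Or.inr (Or.inr (Or.inr (Or.inl (oddA T hST subset_rfl (Or.inl h))))))
  · by_cases hs : S.card ≤ 1
    · obtain ⟨K, hK1, hK2, hK3⟩ := Finset.exists_subsuperset_card_eq hST hs (by omega)
      exact Or.inr (Or.inr (Or.inr (Or.inr (Or.inl (oddA K hK1 hK2 (Or.inl hK3))))))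
    · exact Or.inr (Or.inr (Or.inr (Or.inr (Or.inr (flipEven (hSeqT (by omega)) h)))))
  · exact Or.inr (Or.inr (Or.inr (Or.inr (Or.inl (oddA T hST subset_rfl (Or.inr h))))))
  · exact Or.inr (Or.inr (Or.inr (Or.inr (Or.inr (evenA T hST subset_rfl (Or.inl h))))))
  · by_cases hs : S.card ≤ 4
    · obtain ⟨K, hK1, hK2, hK3⟩ := Finset.exists_subsuperset_card_eq hST hs (by omega)
      exact Or.inr (Or.inr (Or.inr (Or.inr (Or.inr (evenA K hK1 hK2 (Or.inl hK3))))))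
    · exact Or.inr (Or.inr (Or.inr (Or.inr (Or.inl (flipOdd (hSeqT (by omega)) (Or.inl h))))))
  · exact Or.inr (Or.inr (Or.inr (Or.inr (Or.inr (evenA T hST subset_rfl (Or.inr h))))))
  · by_cases hs : S.card ≤ 6
    · obtain ⟨K, hK1, hK2, hK3⟩ := Finset.exists_subsuperset_card_eq hST hs (by omega)
      exact Or.inr (Or.inr (Or.inr (Or.inr (Or.inr (evenA K hK1 hK2 (Or.inr hK3))))))
    · exact Or.inr (Or.inr (Or.inr (Or.inr (Or.inl (flipOdd (hSeqT (by omega)) (Or.inr h))))))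
end
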